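/- arXiv:1001.0714 — 4 statements merged into one kernel-verified Lean document; each statement's English description precedes it below -/
import Mathlib

section
/- For a convex body K in ℝⁿ, an interior point x of K is the Santaló point of K if and only if 0 is the centroid of (K − x)^∘. -/
/-!
Write `h_K w = sup_{z ∈ K} ⟪w, z⟫` for the support function of `K`. For `y` in the interior of
`K`, the function `q_y w = h_K w - ⟪w, y⟫` is nonnegative and positively homogeneous, and its
unit sublevel set is `K^y`. Slicing `exp (-q_y)` into its sublevel sets `t • K^y` gives
`∫ exp (⟪w, y⟫ - h_K w) dw = n! · vol (K^y)` and
`∫ ⟪w, u⟫ exp (⟪w, y⟫ - h_K w) dw = (n + 1)! · ⟪∫_{K^y} w, u⟫`.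
So, up to the factor `n!`, `y ↦ vol (K^y)` is the Laplace transform
`Φ y = ∫ exp (⟪w, y⟫ - h_K w) dw`, a convex function whose gradient at `x` is a positive multiple
of `∫_{K^x} w`; and a convex differentiable function is minimal on an open set exactly where its
gradient vanishes.
-/

open MeasureTheory
open scoped Pointwise RealInnerProductSpace

/-- The centroid (center of gravity) of a set `K`: `(1/vol K) ∫_K x dx`. -/
noncomputable def centroid {E : Type*} [NormedAddCommGroup E] [NormedSpace ℝ E]
    [MeasureSpace E] (K : Set E) : E :=
  ((volume K).toReal)⁻¹ • ∫ x in K, x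

/-- The polar of `K` with respect to `x`: `K^x = (K - x)^∘ = {y : ⟨y, z - x⟩ ≤ 1 ∀ z ∈ K}`. -/
def polarAt {n : ℕ} (K : Set (EuclideanSpace ℝ (Fin n)))
    (x : EuclideanSpace ℝ (Fin n)) : Set (EuclideanSpace ℝ (Fin n)) :=
  {y | ∀ z ∈ K, ⟪y, z - x⟫ ≤ 1}

/-- `x` is a Santaló point of `K`: an interior point of `K` at which
`vol(K)·vol(K^x)` attains its minimum over interior points. -/
def IsSantaloPoint {n : ℕ} (K : Set (EuclideanSpace ℝ (Fin n)))
    (x : EuclideanSpace ℝ (Fin n)) : Prop :=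
  x ∈ interior K ∧
    ∀ y ∈ interior K, volume K * volume (polarAt K x) ≤ volume K * volume (polarAt K y)

open Real Set Module
open scoped ENNReal Nat Topology

theorem lintegral_pow_mul_exp_neg_Ioi (m : ℕ) :
    ∫⁻ t in Ioi (0 : ℝ), ENNReal.ofReal (t ^ m * exp (-t)) = m ! := by
  have hcongr : EqOn (fun t : ℝ => exp (-t) * t ^ ((m + 1 : ℝ) - 1))
      (fun t => t ^ m * exp (-t)) (Ioi 0) := fun t _ => by
    simp only [add_sub_cancel_right, rpow_natCast, mul_comm]
  have hint : IntegrableOn (fun t : ℝ => t ^ m * exp (-t)) (Ioi 0) :=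
    (GammaIntegral_convergent (by positivity)).congr_fun hcongr measurableSet_Ioi
  rw [← ofReal_integral_eq_lintegral_ofReal hint
    ((ae_restrict_iff' measurableSet_Ioi).2 (.of_forall fun t (ht : 0 < t) => by positivity)),
    ← setIntegral_congr_fun measurableSet_Ioi hcongr, ← Gamma_eq_integral (by positivity),
    Gamma_nat_eq_factorial, ENNReal.ofReal_natCast]

theorem ofReal_exp_neg_eq_lintegral_indicator (a : ℝ) :
    ENNReal.ofReal (exp (-a)) = ∫⁻ t, (Ici a).indicator (fun t => ENNReal.ofReal (exp (-t))) t := by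
  rw [lintegral_indicator measurableSet_Ici, ← setLIntegral_congr Ioi_ae_eq_Ici,
    ← ofReal_integral_eq_lintegral_ofReal (integrableOn_exp_neg_Ioi a)
      (.of_forall fun t => (exp_pos _).le), integral_exp_neg_Ioi]

theorem lintegral_mul_exp_neg_eq_lintegral_setLIntegral_sublevel {α : Type*} [MeasurableSpace α]
    {μ : Measure α} [SFinite μ] {q : α → ℝ} {ℓ : α → ℝ≥0∞} (hq : Measurable q)
    (hℓ : Measurable ℓ) :
    ∫⁻ w, ℓ w * ENNReal.ofReal (exp (-q w)) ∂μ =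
      ∫⁻ t, (∫⁻ w in {w | q w ≤ t}, ℓ w ∂μ) * ENNReal.ofReal (exp (-t)) := by
  set G : α × ℝ → ℝ≥0∞ :=
    {p | q p.1 ≤ p.2}.indicator fun p => ℓ p.1 * ENNReal.ofReal (exp (-p.2))
  have hG : Measurable G := ((hℓ.comp measurable_fst).mul (by fun_prop)).indicator
    (measurableSet_le (hq.comp measurable_fst) measurable_snd)
  have hG_fst : ∀ w, ∫⁻ t, G (w, t) = ℓ w * ENNReal.ofReal (exp (-q w)) := fun w => by
    rw [ofReal_exp_neg_eq_lintegral_indicator, ← lintegral_const_mul _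
      ((by fun_prop : Measurable fun t : ℝ => ENNReal.ofReal (exp (-t))).indicator
        measurableSet_Ici)]
    congr 1 with t
    simp only [G, indicator, mem_ofPred_eq, mem_Ici]
    split_ifs <;> simp
  have hG_snd : ∀ t, ∫⁻ w, G (w, t) ∂μ =
      (∫⁻ w in {w | q w ≤ t}, ℓ w ∂μ) * ENNReal.ofReal (exp (-t)) := fun t => by
    rw [← lintegral_indicator (measurableSet_le hq measurable_const),
      ← lintegral_mul_const' _ _ ENNReal.ofReal_ne_top]
    congr 1 with w
    simp only [G, indicator, mem_ofPred_eq]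
    split_ifs <;> simp
  simp only [← hG_fst, ← hG_snd]
  exact lintegral_lintegral_swap (hG.comp measurable_id).aemeasurable

section Homogeneous

variable {E : Type*} [NormedAddCommGroup E] [NormedSpace ℝ E] [FiniteDimensional ℝ E]
  [MeasurableSpace E] [BorelSpace E] (μ : Measure E) [μ.IsAddHaarMeasure]
  {q : E → ℝ} {ℓ : E → ℝ≥0∞} {k : ℕ}

theorem lintegral_eq_ofReal_pow_mul_lintegral_comp_smul (f : E → ℝ≥0∞) {r : ℝ} (hr : 0 < r) :
    ∫⁻ x, f x ∂μ = ENNReal.ofReal (r ^ finrank ℝ E) * ∫⁻ x, f (r • x) ∂μ := by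
  have hmap := Measure.map_addHaar_smul μ (inv_ne_zero hr.ne')
  rw [inv_pow, inv_inv, abs_of_pos (by positivity)] at hmap
  have := lintegral_map_equiv (fun x => f (r • x))
    (Homeomorph.smulOfNeZero r⁻¹ (inv_ne_zero hr.ne')).toMeasurableEquiv (μ := μ)
  simp only [Homeomorph.toMeasurableEquiv_coe, Homeomorph.smulOfNeZero_apply,
    smul_inv_smul₀ hr.ne'] at this
  rw [← this, hmap, lintegral_smul_measure, smul_eq_mul]

theorem setLIntegral_sublevel_of_homogeneous (hq : Measurable q)
    (hq_smul : ∀ t : ℝ, 0 < t → ∀ w, q (t • w) = t * q w)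
    (hℓ_smul : ∀ t : ℝ, 0 < t → ∀ w, ℓ (t • w) = ENNReal.ofReal t ^ k * ℓ w) {t : ℝ} (ht : 0 < t) :
    ∫⁻ w in {w | q w ≤ t}, ℓ w ∂μ =
      ENNReal.ofReal t ^ (finrank ℝ E + k) * ∫⁻ w in {w | q w ≤ 1}, ℓ w ∂μ := by
  have hscale : ∀ w, {w | q w ≤ t}.indicator ℓ (t • w) =
      ENNReal.ofReal t ^ k * {w | q w ≤ 1}.indicator ℓ w := fun w => by
    simp only [indicator, mem_ofPred_eq, hq_smul t ht, hℓ_smul t ht, mul_le_iff_le_one_right ht]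
    split_ifs <;> simp
  rw [← lintegral_indicator (measurableSet_le hq measurable_const),
    lintegral_eq_ofReal_pow_mul_lintegral_comp_smul μ _ ht, ← lintegral_indicator
      (measurableSet_le hq measurable_const)]
  simp only [hscale]
  rw [lintegral_const_mul' _ _ (by simp), ENNReal.ofReal_pow ht.le, pow_add, mul_assoc]

theorem lintegral_mul_exp_neg_of_homogeneous (hq : Measurable q) (hq_nonneg : ∀ w, 0 ≤ q w)
    (hq_smul : ∀ t : ℝ, 0 < t → ∀ w, q (t • w) = t * q w) (hℓ : Measurable ℓ)
    (hℓ_smul : ∀ t : ℝ, 0 < t → ∀ w, ℓ (t • w) = ENNReal.ofReal t ^ k * ℓ w) :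
    ∫⁻ w, ℓ w * ENNReal.ofReal (exp (-q w)) ∂μ =
      (finrank ℝ E + k)! * ∫⁻ w in {w | q w ≤ 1}, ℓ w ∂μ := by
  have hlayer : ∀ᵐ t, (∫⁻ w in {w | q w ≤ t}, ℓ w ∂μ) * ENNReal.ofReal (exp (-t)) =
      (Ioi 0).indicator (fun t => ENNReal.ofReal (t ^ (finrank ℝ E + k) * exp (-t))) t *
        ∫⁻ w in {w | q w ≤ 1}, ℓ w ∂μ := by
    filter_upwards [Measure.ae_ne volume 0] with t ht
    rcases ht.lt_or_gt with ht | ht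
    · have : {w | q w ≤ t} = ∅ := eq_empty_of_forall_notMem fun w hw =>
        (hq_nonneg w).not_gt (lt_of_le_of_lt hw ht)
      simp [this, ht.not_gt]
    · rw [indicator_of_mem (mem_Ioi.2 ht),
        setLIntegral_sublevel_of_homogeneous μ hq hq_smul hℓ_smul ht,
        ENNReal.ofReal_mul (by positivity), ENNReal.ofReal_pow ht.le]
      ring
  rw [lintegral_mul_exp_neg_eq_lintegral_setLIntegral_sublevel hq hℓ, lintegral_congr_ae hlayer,
    lintegral_mul_const _ ((by fun_prop : Measurable fun t : ℝ => _).indicator measurableSet_Ioi),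
    lintegral_indicator measurableSet_Ioi, lintegral_pow_mul_exp_neg_Ioi]

variable {f : E → ℝ}

theorem lintegral_ofReal_mul_exp_neg_of_homogeneous (hq : Measurable q) (hq_nonneg : ∀ w, 0 ≤ q w)
    (hq_smul : ∀ t : ℝ, 0 < t → ∀ w, q (t • w) = t * q w) (hf : Measurable f)
    (hf_smul : ∀ t : ℝ, 0 < t → ∀ w, f (t • w) = t ^ k * f w) :
    ∫⁻ w, ENNReal.ofReal (f w * exp (-q w)) ∂μ =
      (finrank ℝ E + k)! * ∫⁻ w in {w | q w ≤ 1}, ENNReal.ofReal (f w) ∂μ := by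
  simp only [ENNReal.ofReal_mul' (exp_pos _).le]
  refine lintegral_mul_exp_neg_of_homogeneous μ hq hq_nonneg hq_smul hf.ennreal_ofReal
    fun t ht w => ?_
  rw [hf_smul t ht, ENNReal.ofReal_mul (by positivity), ENNReal.ofReal_pow ht.le]

theorem integrable_mul_exp_neg_of_homogeneous (hq : Measurable q) (hq_nonneg : ∀ w, 0 ≤ q w)
    (hq_smul : ∀ t : ℝ, 0 < t → ∀ w, q (t • w) = t * q w) (hf : Measurable f)
    (hf_smul : ∀ t : ℝ, 0 < t → ∀ w, f (t • w) = t ^ k * f w)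
    (hf_int : IntegrableOn f {w | q w ≤ 1} μ) :
    Integrable (fun w => f w * exp (-q w)) μ := by
  refine ⟨(hf.mul (hq.neg.exp)).aestronglyMeasurable, ?_⟩
  have henorm : ∀ w, ‖f w * exp (-q w)‖ₑ = ‖f w‖ₑ * ENNReal.ofReal (exp (-q w)) := fun w => by
    rw [enorm_mul, Real.enorm_of_nonneg (exp_pos _).le]
  simp only [HasFiniteIntegral, henorm]
  rw [lintegral_mul_exp_neg_of_homogeneous μ hq hq_nonneg hq_smul hf.enorm fun t ht w => by
    rw [hf_smul t ht, enorm_mul, enorm_pow, Real.enorm_of_nonneg ht.le]]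
  exact ENNReal.mul_lt_top (by simp) hf_int.2

theorem integral_mul_exp_neg_of_homogeneous (hq : Measurable q) (hq_nonneg : ∀ w, 0 ≤ q w)
    (hq_smul : ∀ t : ℝ, 0 < t → ∀ w, q (t • w) = t * q w) (hf : Measurable f)
    (hf_smul : ∀ t : ℝ, 0 < t → ∀ w, f (t • w) = t ^ k * f w)
    (hf_int : IntegrableOn f {w | q w ≤ 1} μ) :
    ∫ w, f w * exp (-q w) ∂μ = (finrank ℝ E + k)! * ∫ w in {w | q w ≤ 1}, f w ∂μ := by
  have hneg_smul : ∀ t : ℝ, 0 < t → ∀ w, -f (t • w) = t ^ k * -f w := fun t ht w => by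
    rw [hf_smul t ht, mul_neg]
  simp only [integral_eq_lintegral_pos_part_sub_lintegral_neg_part
      (integrable_mul_exp_neg_of_homogeneous μ hq hq_nonneg hq_smul hf hf_smul hf_int),
    integral_eq_lintegral_pos_part_sub_lintegral_neg_part hf_int, ← neg_mul]
  rw [lintegral_ofReal_mul_exp_neg_of_homogeneous μ hq hq_nonneg hq_smul hf hf_smul,
    lintegral_ofReal_mul_exp_neg_of_homogeneous (f := fun w => -f w) μ hq hq_nonneg hq_smul
      hf.neg hneg_smul]
  simp [ENNReal.toReal_mul, mul_sub]

end Homogeneous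

theorem abs_mul_exp_mul_le {δ t : ℝ} (hδ : 0 < δ) (ht : |t| ≤ δ / 2) (s : ℝ) :
    |s| * exp (t * s) ≤ 2 / δ * (exp (δ * s) + exp (-(δ * s))) := by
  have habs : |s| ≤ 2 / δ * exp (δ / 2 * |s|) :=
    calc |s| = 2 / δ * (δ / 2 * |s|) := by field_simp
      _ ≤ 2 / δ * exp (δ / 2 * |s|) := by gcongr; linarith [add_one_le_exp (δ / 2 * |s|)]
  have hexp : exp (t * s) ≤ exp (δ / 2 * |s|) :=
    exp_le_exp.2 ((le_abs_self _).trans (by rw [abs_mul]; gcongr))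
  have hsum : exp (δ * |s|) ≤ exp (δ * s) + exp (-(δ * s)) := by
    rcases abs_choice s with h | h <;> rw [h] <;> simp [mul_neg, (exp_pos _).le]
  calc |s| * exp (t * s) ≤ 2 / δ * exp (δ / 2 * |s|) * exp (δ / 2 * |s|) := by gcongr
    _ = 2 / δ * exp (δ * |s|) := by rw [mul_assoc, ← exp_add]; ring_nf
    _ ≤ _ := by gcongr

theorem exists_pos_forall_Icc_add_smul_mem {E : Type*} [NormedAddCommGroup E] [NormedSpace ℝ E]
    {U : Set E} (hU : IsOpen U) {x : E} (hx : x ∈ U) (u : E) :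
    ∃ δ > (0 : ℝ), ∀ t ∈ Icc (-δ) δ, x + t • u ∈ U := by
  have : ∀ᶠ t in 𝓝 (0 : ℝ), x + t • u ∈ U := by
    refine (Continuous.tendsto (by fun_prop) 0).eventually (hU.mem_nhds ?_)
    simpa using hx
  obtain ⟨ε, hε, hball⟩ := Metric.eventually_nhds_iff.1 this
  refine ⟨ε / 2, half_pos hε, fun t ht => hball ?_⟩
  rw [Real.dist_eq, sub_zero, abs_lt]
  constructor <;> linarith [ht.1, ht.2]

section LaplaceTransform

variable {α : Type*} [MeasurableSpace α] {μ : Measure α} {g s : α → ℝ}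

theorem hasDerivAt_integral_exp_add_mul (hs : AEStronglyMeasurable s μ) {δ : ℝ} (hδ : 0 < δ)
    (hint : ∀ t ∈ Icc (-δ) δ, Integrable (fun a => exp (g a + t * s a)) μ) :
    Integrable (fun a => s a * exp (g a)) μ ∧
      HasDerivAt (fun t => ∫ a, exp (g a + t * s a) ∂μ) (∫ a, s a * exp (g a) ∂μ) 0 := by
  have hint_δ : Integrable (fun a => 2 / δ * (exp (g a + δ * s a) + exp (g a + -δ * s a))) μ :=
    ((hint δ (by constructor <;> linarith)).add
      (hint (-δ) (by constructor <;> linarith))).const_mul _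
  have hbound : ∀ a, ∀ t ∈ Metric.ball (0 : ℝ) (δ / 2),
      ‖s a * exp (g a + t * s a)‖ ≤ 2 / δ * (exp (g a + δ * s a) + exp (g a + -δ * s a)) := by
    intro a t ht
    rw [Metric.mem_ball, dist_zero_right, Real.norm_eq_abs] at ht
    have := mul_le_mul_of_nonneg_left (abs_mul_exp_mul_le hδ ht.le (s a)) (exp_pos (g a)).le
    rw [norm_mul, Real.norm_eq_abs, Real.norm_eq_abs, abs_exp, exp_add, exp_add, exp_add, neg_mul]
    linarith
  have := hasDerivAt_integral_of_dominated_loc_of_deriv_le (μ := μ) (x₀ := 0)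
    (F := fun t a => exp (g a + t * s a)) (F' := fun t a => s a * exp (g a + t * s a))
    (Metric.ball_mem_nhds 0 (half_pos hδ))
    (Filter.eventually_of_mem (Icc_mem_nhds (neg_neg_of_pos hδ) hδ)
      fun t ht => (hint t ht).aestronglyMeasurable)
    (hint 0 (by constructor <;> linarith))
    (hs.mul (hint 0 (by constructor <;> linarith)).aestronglyMeasurable)
    (.of_forall hbound) hint_δ
    (.of_forall fun a t _ => by
      simpa [mul_comm] using ((hasDerivAt_mul_const (s a)).const_add (g a)).exp)
  simpa using this

end LaplaceTransform

theorem isMinOn_integral_exp_inner_sub_iff {E : Type*} [NormedAddCommGroup E]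
    [InnerProductSpace ℝ E] [MeasurableSpace E] [OpensMeasurableSpace E] {μ : Measure E}
    {h : E → ℝ} {U : Set E} (hU : IsOpen U)
    (hint : ∀ y ∈ U, Integrable (fun w => exp (⟪w, y⟫ - h w)) μ) {x : E} (hx : x ∈ U) :
    IsMinOn (fun y => ∫ w, exp (⟪w, y⟫ - h w) ∂μ) U x ↔
      ∀ u, ∫ w, ⟪w, u⟫ * exp (⟪w, x⟫ - h w) ∂μ = 0 := by
  have hline : ∀ u t w, ⟪w, x + t • u⟫ - h w = ⟪w, x⟫ - h w + t * ⟪w, u⟫ := fun u t w => by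
    rw [inner_add_right, real_inner_smul_right]; ring
  have hderiv : ∀ u, ∃ δ > (0 : ℝ), (∀ t ∈ Icc (-δ) δ, x + t • u ∈ U) ∧
      Integrable (fun w => ⟪w, u⟫ * exp (⟪w, x⟫ - h w)) μ ∧
      HasDerivAt (fun t : ℝ => ∫ w, exp (⟪w, x + t • u⟫ - h w) ∂μ)
        (∫ w, ⟪w, u⟫ * exp (⟪w, x⟫ - h w) ∂μ) 0 := fun u => by
    obtain ⟨δ, hδ, hδU⟩ := exists_pos_forall_Icc_add_smul_mem hU hx u
    simp only [hline]
    exact ⟨δ, hδ, hδU, hasDerivAt_integral_exp_add_mul (by fun_prop) hδ fun t ht => by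
      simpa only [hline] using hint _ (hδU t ht)⟩
  constructor
  · intro hmin u
    obtain ⟨δ, hδ, hδU, -, hD⟩ := hderiv u
    refine IsLocalMin.hasDerivAt_eq_zero ?_ hD
    filter_upwards [Icc_mem_nhds (neg_neg_of_pos hδ) hδ] with t ht
    simpa using hmin (hδU t ht)
  · refine fun hD => isMinOn_iff.2 fun y hy => ?_
    obtain ⟨-, -, -, hint', -⟩ := hderiv (y - x)
    have hpoint : ∀ w, exp (⟪w, x⟫ - h w) + ⟪w, y - x⟫ * exp (⟪w, x⟫ - h w) ≤
        exp (⟪w, y⟫ - h w) := fun w => by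
      have := add_one_le_exp ⟪w, y - x⟫
      calc exp (⟪w, x⟫ - h w) + ⟪w, y - x⟫ * exp (⟪w, x⟫ - h w)
          = exp (⟪w, x⟫ - h w) * (⟪w, y - x⟫ + 1) := by ring
        _ ≤ exp (⟪w, x⟫ - h w) * exp ⟪w, y - x⟫ := by gcongr
        _ = exp (⟪w, y⟫ - h w) := by rw [← exp_add, inner_sub_right]; ring_nf
    have := integral_mono ((hint x hx).add hint') (hint y hy) hpoint
    rwa [Pi.add_def, integral_add (hint x hx) hint', hD, add_zero] at this

section SupportFunction

variable {F : Type*} [NormedAddCommGroup F] [InnerProductSpace ℝ F] {K : Set F}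

/-- `⨆` of a family of reals that is empty or unbounded above is `0`, so this is only meaningful
for nonempty bounded `K`. -/
noncomputable def supportFunction (K : Set F) (w : F) : ℝ :=
  ⨆ z : K, ⟪w, (z : F)⟫

theorem IsCompact.bddAbove_range_inner (hK : IsCompact K) (w : F) :
    BddAbove (range fun z : K => ⟪w, (z : F)⟫) := by
  rw [← image_eq_range]
  exact (hK.image (continuous_const.inner continuous_id)).bddAbove

theorem inner_le_supportFunction (hK : IsCompact K) {z : F} (hz : z ∈ K) (w : F) :
    ⟪w, z⟫ ≤ supportFunction K w :=
  le_ciSup (hK.bddAbove_range_inner w) ⟨z, hz⟩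

theorem supportFunction_le_iff (hK : IsCompact K) (hne : K.Nonempty) {w : F} {a : ℝ} :
    supportFunction K w ≤ a ↔ ∀ z ∈ K, ⟪w, z⟫ ≤ a := by
  have := hne.to_subtype
  simp [supportFunction, ciSup_le_iff (hK.bddAbove_range_inner w)]

theorem supportFunction_smul {t : ℝ} (ht : 0 ≤ t) (w : F) :
    supportFunction K (t • w) = t * supportFunction K w := by
  simp only [supportFunction, real_inner_smul_left, Real.mul_iSup_of_nonneg ht]

theorem measurable_supportFunction [MeasurableSpace F] [OpensMeasurableSpace F]
    (hK : IsCompact K) : Measurable (supportFunction K) :=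
  (lowerSemicontinuous_ciSup (hK.bddAbove_range_inner)
    fun _ => (continuous_id.inner continuous_const).lowerSemicontinuous).measurable

theorem exists_pos_mul_norm_le_supportFunction_sub (hK : IsCompact K) {y : F}
    (hy : y ∈ interior K) : ∃ ε > (0 : ℝ), ∀ w, ε * ‖w‖ ≤ supportFunction K w - ⟪w, y⟫ := by
  obtain ⟨ε, hε, hball⟩ := Metric.nhds_basis_closedBall.mem_iff.1 (mem_interior_iff_mem_nhds.1 hy)
  refine ⟨ε, hε, fun w => ?_⟩
  -- `‖0‖⁻¹ = 0`, so the case `w = 0` needs no separate treatment.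
  have hz : y + (ε * ‖w‖⁻¹) • w ∈ K := hball <| by
    rw [Metric.mem_closedBall, dist_eq_norm, add_sub_cancel_left, norm_smul, norm_mul,
      Real.norm_of_nonneg hε.le, norm_inv, norm_norm, mul_assoc]
    exact mul_le_of_le_one_right hε.le inv_mul_le_one
  have := inner_le_supportFunction hK hz w
  have hnorm : ‖w‖⁻¹ * ‖w‖ ^ 2 = ‖w‖ := by
    rcases eq_or_ne ‖w‖ 0 with h | h
    · simp [h]
    · field_simp
  rw [inner_add_right, real_inner_smul_right, real_inner_self_eq_norm_sq, mul_assoc, hnorm] at this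
  linarith

theorem supportFunction_sub_inner_nonneg (hK : IsCompact K) {y : F} (hy : y ∈ K) (w : F) :
    0 ≤ supportFunction K w - ⟪w, y⟫ :=
  sub_nonneg.2 (inner_le_supportFunction hK hy w)

theorem supportFunction_sub_inner_smul (y : F) {t : ℝ} (ht : 0 < t) (w : F) :
    supportFunction K (t • w) - ⟪t • w, y⟫ = t * (supportFunction K w - ⟪w, y⟫) := by
  rw [supportFunction_smul ht.le, real_inner_smul_left, mul_sub]

end SupportFunction

section Polar

variable {n : ℕ} {K : Set (EuclideanSpace ℝ (Fin n))} {y : EuclideanSpace ℝ (Fin n)}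

theorem polarAt_eq_setOf_supportFunction (hK : IsCompact K) (hne : K.Nonempty)
    (y : EuclideanSpace ℝ (Fin n)) : polarAt K y = {w | supportFunction K w - ⟪w, y⟫ ≤ 1} := by
  ext w
  simp [polarAt, supportFunction_le_iff hK hne, inner_sub_right]

theorem isCompact_polarAt (hK : IsCompact K) (hy : y ∈ interior K) : IsCompact (polarAt K y) := by
  obtain ⟨ε, hε, hq⟩ := exists_pos_mul_norm_le_supportFunction_sub hK hy
  refine Metric.isCompact_of_isClosed_isBounded ?_
    ((Metric.isBounded_closedBall (x := 0) (r := ε⁻¹)).subset ?_)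
  · simp only [polarAt, ofPred_forall]
    exact isClosed_biInter fun z _ => isClosed_le (by fun_prop) continuous_const
  · intro w hw
    rw [polarAt_eq_setOf_supportFunction hK ⟨y, interior_subset hy⟩] at hw
    rw [mem_closedBall_zero_iff, ← mul_one ε⁻¹, le_inv_mul_iff₀ hε]
    exact (hq w).trans hw

theorem integrable_mul_exp_inner_sub_supportFunction (hK : IsCompact K) (hy : y ∈ interior K)
    {f : EuclideanSpace ℝ (Fin n) → ℝ} {k : ℕ} (hf : Continuous f)
    (hf_smul : ∀ t : ℝ, 0 < t → ∀ w, f (t • w) = t ^ k * f w) :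
    Integrable (fun w => f w * exp (⟪w, y⟫ - supportFunction K w)) := by
  have hf_int := hf.continuousOn.integrableOn_compact (μ := volume) (isCompact_polarAt hK hy)
  rw [polarAt_eq_setOf_supportFunction hK ⟨y, interior_subset hy⟩] at hf_int
  simpa only [neg_sub] using integrable_mul_exp_neg_of_homogeneous volume
    (q := fun w => supportFunction K w - ⟪w, y⟫)
    ((measurable_supportFunction hK).sub (by fun_prop))
    (supportFunction_sub_inner_nonneg hK (interior_subset hy))
    (fun t ht => supportFunction_sub_inner_smul y ht) hf.measurable hf_smul hf_int

theorem integral_mul_exp_inner_sub_supportFunction (hK : IsCompact K) (hy : y ∈ interior K)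
    {f : EuclideanSpace ℝ (Fin n) → ℝ} {k : ℕ} (hf : Continuous f)
    (hf_smul : ∀ t : ℝ, 0 < t → ∀ w, f (t • w) = t ^ k * f w) :
    ∫ w, f w * exp (⟪w, y⟫ - supportFunction K w) = (n + k)! * ∫ w in polarAt K y, f w := by
  have hf_int := hf.continuousOn.integrableOn_compact (μ := volume) (isCompact_polarAt hK hy)
  rw [polarAt_eq_setOf_supportFunction hK ⟨y, interior_subset hy⟩] at hf_int ⊢
  simpa only [neg_sub, finrank_euclideanSpace_fin] using integral_mul_exp_neg_of_homogeneous volume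
    (q := fun w => supportFunction K w - ⟪w, y⟫)
    ((measurable_supportFunction hK).sub (by fun_prop))
    (supportFunction_sub_inner_nonneg hK (interior_subset hy))
    (fun t ht => supportFunction_sub_inner_smul y ht) hf.measurable hf_smul hf_int

theorem integrable_exp_inner_sub_supportFunction (hK : IsCompact K) (hy : y ∈ interior K) :
    Integrable (fun w => exp (⟪w, y⟫ - supportFunction K w)) := by
  simpa using integrable_mul_exp_inner_sub_supportFunction hK hy (f := fun _ => 1)
    continuous_const (k := 0) fun _ _ _ => by simp

theorem integral_exp_inner_sub_supportFunction (hK : IsCompact K) (hy : y ∈ interior K) :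
    ∫ w, exp (⟪w, y⟫ - supportFunction K w) = n ! * volume.real (polarAt K y) := by
  simpa using integral_mul_exp_inner_sub_supportFunction hK hy (f := fun _ => 1) continuous_const
    (k := 0) fun _ _ _ => by simp

theorem integral_inner_mul_exp_inner_sub_supportFunction (hK : IsCompact K) (hy : y ∈ interior K)
    (u : EuclideanSpace ℝ (Fin n)) :
    ∫ w, ⟪w, u⟫ * exp (⟪w, y⟫ - supportFunction K w) =
      (n + 1)! * ⟪∫ w in polarAt K y, w, u⟫ := by
  rw [integral_mul_exp_inner_sub_supportFunction hK hy (by fun_prop) (k := 1)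
    fun t _ w => by rw [real_inner_smul_left, pow_one], real_inner_comm, ← integral_inner
    (continuous_id'.continuousOn.integrableOn_compact (isCompact_polarAt hK hy))]
  simp only [real_inner_comm u]

theorem measureReal_polarAt_pos (hK : IsCompact K) (hy : y ∈ interior K) :
    0 < volume.real (polarAt K y) := by
  have := integral_exp_pos (integrable_exp_inner_sub_supportFunction hK hy)
  rw [integral_exp_inner_sub_supportFunction hK hy] at this
  exact pos_of_mul_pos_right this (by positivity)

theorem volume_polarAt_le_volume_polarAt_iff (hK : IsCompact K) {x : EuclideanSpace ℝ (Fin n)}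
    (hx : x ∈ interior K) (hy : y ∈ interior K) :
    volume (polarAt K x) ≤ volume (polarAt K y) ↔
      ∫ w, exp (⟪w, x⟫ - supportFunction K w) ≤ ∫ w, exp (⟪w, y⟫ - supportFunction K w) := by
  rw [integral_exp_inner_sub_supportFunction hK hx, integral_exp_inner_sub_supportFunction hK hy,
    mul_le_mul_iff_right₀ (by positivity), measureReal_def, measureReal_def,
    ENNReal.toReal_le_toReal (isCompact_polarAt hK hx).measure_lt_top.ne
      (isCompact_polarAt hK hy).measure_lt_top.ne]

end Polar

theorem isSantaloPoint_iff_centroid_polar_eq_zero_general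
    {n : ℕ} (K : Set (EuclideanSpace ℝ (Fin n)))
    (hK : IsCompact K)
    (x : EuclideanSpace ℝ (Fin n)) (hx : x ∈ interior K) :
    IsSantaloPoint K x ↔ centroid (polarAt K x) = 0 := by
  have hK_pos : volume K ≠ 0 := (Measure.measure_pos_of_nonempty_interior _ ⟨x, hx⟩).ne'
  calc IsSantaloPoint K x
      ↔ IsMinOn (fun y => ∫ w, exp (⟪w, y⟫ - supportFunction K w)) (interior K) x := by
        simp only [IsSantaloPoint, hx, true_and, isMinOn_iff,
          ENNReal.mul_le_mul_iff_right hK_pos hK.measure_lt_top.ne]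
        exact forall₂_congr fun y hy => volume_polarAt_le_volume_polarAt_iff hK hx hy
    _ ↔ ∀ u, ∫ w, ⟪w, u⟫ * exp (⟪w, x⟫ - supportFunction K w) = 0 :=
        isMinOn_integral_exp_inner_sub_iff isOpen_interior
          (fun y hy => integrable_exp_inner_sub_supportFunction hK hy) hx
    _ ↔ ∀ u, ⟪∫ w in polarAt K x, w, u⟫ = 0 := by
        simp [integral_inner_mul_exp_inner_sub_supportFunction hK hx, Nat.factorial_ne_zero]
    _ ↔ ∫ w in polarAt K x, w = 0 :=
        ⟨fun h => inner_self_eq_zero.1 (h _), fun h u => by simp [h]⟩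
    _ ↔ centroid (polarAt K x) = 0 := by
        simp [centroid, ← measureReal_def, (measureReal_polarAt_pos hK hx).ne']

/-- For a convex body `K` in `ℝⁿ`, an interior point `x` of `K` is the Santaló point of `K`
if and only if `0` is the centroid of `(K - x)^∘`. -/
theorem isSantaloPoint_iff_centroid_polar_eq_zero
    {n : ℕ} (K : Set (EuclideanSpace ℝ (Fin n)))
    (hK : IsCompact K) (hconv : Convex ℝ K) (hint : (interior K).Nonempty)
    (x : EuclideanSpace ℝ (Fin n)) (hx : x ∈ interior K) :
    IsSantaloPoint K x ↔ centroid (polarAt K x) = 0 :=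
  isSantaloPoint_iff_centroid_polar_eq_zero_general K hK x hx
end

section
/- For all n ∈ ℕ and all t ≥ 0, vol_n(B₂ⁿ + t B_∞ⁿ) = Σ_{k=0}^{n} C(n,k) · 2^k · vol_{n−k}(B₂^{n−k}) · t^k, where B₂ⁿ + t B_∞ⁿ is the Minkowski sum, vol_{n−k}(B₂^{n−k}) = π^{(n−k)/2}/Γ(1 + (n−k)/2) is the volume of the (n−k)-dimensional Euclidean unit ball, and by convention vol₀(B₂⁰) = 1. -/
/-!
A point lies in `B₂ⁿ + t B_∞ⁿ` exactly when the squared distances of its coordinates to `[-t, t]`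
sum to at most `1`. Integrating out one coordinate, the part `|s| ≤ t` of the line contributes a
slab of width `2t` over the same set one dimension lower, while the two outer half-lines, shifted
by `t`, contribute exactly what the corresponding Euclidean-ball sublevel set would. This binomial
recursion in the dimension expands the volume into `(2t)^k` times volumes of `(n-k)`-balls.
-/

open MeasureTheory Set
open scoped ENNReal Pointwise

/-- For `0 ≤ t`, the distance from `s` to the interval `[-t, t]`. -/
noncomputable def excess (t s : ℝ) : ℝ := max (|s| - t) 0

section Excess

variable {t s : ℝ}

@[fun_prop]
theorem continuous_excess (t : ℝ) : Continuous (excess t) := by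
  unfold excess; fun_prop

theorem excess_nonneg : 0 ≤ excess t s := le_max_right _ _

theorem excess_abs : excess t |s| = excess t s := by simp [excess]

theorem excess_of_abs_le (h : |s| ≤ t) : excess t s = 0 :=
  max_eq_right (sub_nonpos.mpr h)

theorem excess_add_self (ht : 0 ≤ t) (hs : 0 ≤ s) : excess t (s + t) = s := by
  rw [excess, abs_of_nonneg (by linarith), add_sub_cancel_right, max_eq_left hs]

theorem excess_le_abs_sub {q : ℝ} (hq : |q| ≤ t) : excess t s ≤ |s - q| :=
  max_le (by linarith [abs_sub_abs_le_abs_sub s q]) (abs_nonneg _)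

theorem abs_sub_clamp (ht : 0 ≤ t) : |s - max (min s t) (-t)| = excess t s := by
  simp only [excess, abs_eq_max_neg]
  grind

end Excess

theorem lintegral_comp_abs (f : ℝ → ℝ≥0∞) :
    ∫⁻ x, f |x| = 2 * ∫⁻ x in Ioi 0, f x := by
  have hIoi : ∫⁻ x in Ioi 0, f |x| = ∫⁻ x in Ioi 0, f x :=
    setLIntegral_congr_fun measurableSet_Ioi fun x hx => by rw [abs_of_pos hx]
  have hIio : ∫⁻ x in Iio 0, f |x| = ∫⁻ x in Ioi 0, f |x| := by
    have := (Measure.measurePreserving_neg (volume : Measure ℝ)).setLIntegral_comp_preimage_emb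
      (Homeomorph.neg ℝ).measurableEmbedding (fun x => f |x|) (Iio 0)
    simpa using this.symm
  rw [← lintegral_add_compl _ measurableSet_Ioi, compl_Ioi,
    setLIntegral_congr Iio_ae_eq_Iic.symm, hIio, hIoi, two_mul, add_comm]

theorem setLIntegral_Ioi_comp_excess (f : ℝ → ℝ≥0∞) {t : ℝ} (ht : 0 ≤ t) :
    ∫⁻ x in Ioi 0, f (excess t x) = ENNReal.ofReal t * f 0 + ∫⁻ x in Ioi 0, f x := by
  have hIoc : ∫⁻ x in Ioc 0 t, f (excess t x) = ENNReal.ofReal t * f 0 := by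
    rw [setLIntegral_congr_fun measurableSet_Ioc fun x hx =>
        by rw [excess_of_abs_le (abs_le.mpr ⟨by linarith [hx.1], hx.2⟩)],
      setLIntegral_const, Real.volume_Ioc, sub_zero, mul_comm]
  have hIoi : ∫⁻ x in Ioi t, f (excess t x) = ∫⁻ x in Ioi 0, f x := by
    have := (measurePreserving_add_right (volume : Measure ℝ) t).setLIntegral_comp_preimage_emb
      (Homeomorph.addRight t).measurableEmbedding (fun x => f (excess t x)) (Ioi t)
    rw [show (· + t) ⁻¹' Ioi t = Ioi 0 by ext; simp] at this
    rw [← this]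
    exact setLIntegral_congr_fun measurableSet_Ioi fun x hx => by
      rw [excess_add_self ht (le_of_lt hx)]
  conv_lhs => rw [← Ioc_union_Ioi_eq_Ioi ht]
  rw [lintegral_union measurableSet_Ioi Ioc_disjoint_Ioi_same, hIoc, hIoi]

theorem lintegral_comp_excess (f : ℝ → ℝ≥0∞) {t : ℝ} (ht : 0 ≤ t) :
    ∫⁻ x, f (excess t x) = ENNReal.ofReal (2 * t) * f 0 + ∫⁻ x, f |x| := by
  rw [← funext fun x => congrArg f (excess_abs (t := t) (s := x)),
    lintegral_comp_abs (fun x => f (excess t x)), setLIntegral_Ioi_comp_excess f ht,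
    lintegral_comp_abs, ENNReal.ofReal_mul zero_le_two, ENNReal.ofReal_ofNat]
  ring

noncomputable def sublevelVolume (g : ℝ → ℝ) (n : ℕ) (c : ℝ) : ℝ≥0∞ :=
  volume {x : Fin n → ℝ | ∑ i, g (x i) ≤ c}

namespace sublevelVolume

theorem zero_dim_eq (g g' : ℝ → ℝ) (c : ℝ) : sublevelVolume g 0 c = sublevelVolume g' 0 c := by
  simp [sublevelVolume]

theorem monotone (g : ℝ → ℝ) (n : ℕ) : Monotone (sublevelVolume g n) := fun _ _ hcd =>
  measure_mono fun _ hx => le_trans hx hcd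

theorem succ {g : ℝ → ℝ} (hg : Measurable g) (n : ℕ) (c : ℝ) :
    sublevelVolume g (n + 1) c = ∫⁻ s, sublevelVolume g n (c - g s) := by
  set T : Set (ℝ × (Fin n → ℝ)) := {p | g p.1 + ∑ i, g (p.2 i) ≤ c}
  have hT : MeasurableSet T :=
    measurableSet_le ((hg.comp measurable_fst).add
      (Finset.measurable_sum _ fun i _ => hg.comp ((measurable_pi_apply i).comp measurable_snd)))
      measurable_const
  have hpre : MeasurableEquiv.piFinSuccAbove (fun _ => ℝ) 0 ⁻¹' T =
      {x : Fin (n + 1) → ℝ | ∑ i, g (x i) ≤ c} := by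
    ext x
    simp [MeasurableEquiv.piFinSuccAbove, T, Fin.sum_univ_succ, Fin.tail]
  rw [sublevelVolume, ← hpre, (volume_preserving_piFinSuccAbove (fun _ => ℝ) 0).measure_preimage
    hT.nullMeasurableSet, Measure.volume_eq_prod, Measure.prod_apply hT]
  refine lintegral_congr fun s => congrArg volume ?_
  ext x
  simp only [T, mem_preimage, mem_ofPred_eq]
  constructor <;> intro h <;> linarith

end sublevelVolume

theorem sublevelVolume_excess_sq {t : ℝ} (ht : 0 ≤ t) (n : ℕ) (c : ℝ) :
    sublevelVolume (fun s => excess t s ^ 2) n c =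
      ∑ k ∈ Finset.range (n + 1),
        (n.choose k : ℝ≥0∞) * ENNReal.ofReal (2 * t) ^ k * sublevelVolume (· ^ 2) (n - k) c := by
  induction n generalizing c with
  | zero => simp [sublevelVolume.zero_dim_eq _ (· ^ 2)]
  | succ n ih =>
    set a := ENNReal.ofReal (2 * t)
    have hsucc (m : ℕ) :
        ∫⁻ s, sublevelVolume (· ^ 2) m (c - s ^ 2) = sublevelVolume (· ^ 2) (m + 1) c :=
      (sublevelVolume.succ (by fun_prop) m c).symm
    have hmeas (m : ℕ) : Measurable fun s : ℝ => sublevelVolume (· ^ 2) m (c - s ^ 2) :=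
      (sublevelVolume.monotone _ m).measurable.comp (by fun_prop)
    calc sublevelVolume (fun s => excess t s ^ 2) (n + 1) c
        = (∫⁻ s, sublevelVolume (fun s => excess t s ^ 2) n (c - s ^ 2)) +
            a * sublevelVolume (fun s => excess t s ^ 2) n c := by
          rw [sublevelVolume.succ (g := fun s => excess t s ^ 2)
              ((continuous_excess t).measurable.pow_const 2),
            lintegral_comp_excess (fun u => sublevelVolume _ n (c - u ^ 2)) ht, add_comm]
          simp only [sq_abs, sub_zero, zero_pow two_ne_zero]
          rfl
      _ = ∑ k ∈ Finset.range (n + 1), (n.choose k : ℝ≥0∞) * (a ^ k *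
              sublevelVolume (· ^ 2) (n + 1 - k) c) +
            ∑ k ∈ Finset.range (n + 1), (n.choose k : ℝ≥0∞) * (a ^ (k + 1) *
              sublevelVolume (· ^ 2) (n - k) c) := by
          simp_rw [ih, Finset.mul_sum]
          rw [lintegral_finsetSum _ fun k _ => (hmeas _).const_mul _]
          congr 1 <;> refine Finset.sum_congr rfl fun k hk => ?_
          · rw [lintegral_const_mul _ (hmeas _), hsucc,
              Nat.sub_add_comm (Finset.mem_range_succ_iff.mp hk)]
            ring
          · ring
      _ = _ := by
          rw [← Finset.sum_choose_succ_mul (fun i j => a ^ i * sublevelVolume (· ^ 2) j c)]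
          simp_rw [mul_assoc]

theorem sublevelVolume_sq_one (k : ℕ) :
    sublevelVolume (· ^ 2) k 1 =
      ENNReal.ofReal (Real.pi ^ ((k : ℝ) / 2) / Real.Gamma (1 + (k : ℝ) / 2)) := by
  rcases k.eq_zero_or_pos with rfl | hk
  · simp [sublevelVolume, volume_pi]
  have : Nonempty (Fin k) := Fin.pos_iff_nonempty.mp hk
  have hpre : {x : Fin k → ℝ | ∑ i, x i ^ 2 ≤ 1} =
      WithLp.toLp 2 ⁻¹' Metric.closedBall (0 : EuclideanSpace ℝ (Fin k)) 1 := by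
    rw [EuclideanSpace.closedBall_zero_eq _ zero_le_one]
    simp
  rw [sublevelVolume, hpre, (PiLp.volume_preserving_toLp (Fin k)).measure_preimage
    measurableSet_closedBall.nullMeasurableSet, EuclideanSpace.volume_closedBall,
    ENNReal.ofReal_one, one_pow, one_mul, Fintype.card_fin, Real.sqrt_eq_rpow,
    ← Real.rpow_natCast, ← Real.rpow_mul Real.pi_pos.le, add_comm]
  ring_nf

theorem smul_setOf_forall_abs_le_one {ι : Type*} [Fintype ι] {t : ℝ} (ht : 0 ≤ t) :
    t • {x : EuclideanSpace ℝ ι | ∀ i, |x i| ≤ 1} = {x | ∀ i, |x i| ≤ t} := by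
  rcases ht.eq_or_lt with rfl | ht
  · rw [zero_smul_set ⟨0, by simp⟩]
    ext x
    simp only [mem_ofPred_eq, abs_nonpos_iff, Set.mem_zero]
    exact ⟨fun h i => by rw [h]; rfl, fun h => PiLp.ext h⟩
  ext x
  simp [mem_smul_set_iff_inv_smul_mem₀ ht.ne', abs_mul, abs_of_pos ht, inv_mul_le_iff₀ ht]

theorem closedBall_add_smul_cube {ι : Type*} [Fintype ι] {t : ℝ} (ht : 0 ≤ t) :
    Metric.closedBall (0 : EuclideanSpace ℝ ι) 1 + t • {x : EuclideanSpace ℝ ι | ∀ i, |x i| ≤ 1} =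
      {x | ∑ i, excess t (x i) ^ 2 ≤ 1} := by
  ext x
  rw [smul_setOf_forall_abs_le_one ht, EuclideanSpace.closedBall_zero_eq _ zero_le_one]
  simp only [mem_add, mem_ofPred_eq, one_pow]
  constructor
  · rintro ⟨b, hb, q, hq, rfl⟩
    refine le_trans (Finset.sum_le_sum fun i _ => ?_) hb
    have := excess_le_abs_sub (s := b i + q i) (hq i)
    rw [add_sub_cancel_right] at this
    simpa [sq_abs] using pow_le_pow_left₀ excess_nonneg this 2
  · intro hx
    set q : EuclideanSpace ℝ ι := WithLp.toLp 2 fun i => max (min (x i) t) (-t)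
    refine ⟨x - q, ?_, q, fun i => abs_le.mpr ⟨le_max_right _ _, ?_⟩, sub_add_cancel x q⟩
    · have hcoord (i : ι) : (x - q) i ^ 2 = excess t (x i) ^ 2 := by
        rw [← sq_abs, ← abs_sub_clamp ht]
        rfl
      simpa only [hcoord] using hx
    · exact max_le (min_le_right _ _) (by linarith)

/-- For all `n` and `t ≥ 0`,
`vol(B₂ⁿ + t B_∞ⁿ) = ∑_{k=0}^n C(n,k) 2^k vol_{n-k}(B₂^{n-k}) t^k`,
where `vol_{n-k}(B₂^{n-k}) = π^{(n-k)/2}/Γ(1 + (n-k)/2)`. -/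
theorem volume_ball_add_cube (n : ℕ) (t : ℝ) (ht : 0 ≤ t) :
    (volume (Metric.closedBall (0 : EuclideanSpace ℝ (Fin n)) 1 +
        t • {x : EuclideanSpace ℝ (Fin n) | ∀ i, |x i| ≤ 1})).toReal =
      ∑ k ∈ Finset.range (n + 1),
        (n.choose k : ℝ) * 2 ^ k *
          (Real.pi ^ (((n : ℝ) - k) / 2) / Real.Gamma (1 + ((n : ℝ) - k) / 2)) * t ^ k := by
  have hS : MeasurableSet {x : Fin n → ℝ | ∑ i, excess t (x i) ^ 2 ≤ 1} :=
    measurableSet_le (by fun_prop) measurable_const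
  have hvol : volume {x : EuclideanSpace ℝ (Fin n) | ∑ i, excess t (x i) ^ 2 ≤ 1} =
      sublevelVolume (fun s => excess t s ^ 2) n 1 :=
    (PiLp.volume_preserving_ofLp _).measure_preimage hS.nullMeasurableSet
  have hball_nonneg (k : ℕ) : 0 ≤ Real.pi ^ ((k : ℝ) / 2) / Real.Gamma (1 + (k : ℝ) / 2) := by
    positivity
  rw [closedBall_add_smul_cube ht, hvol, sublevelVolume_excess_sq ht]
  simp_rw [sublevelVolume_sq_one]
  rw [ENNReal.toReal_sum fun k _ => by finiteness]
  refine Finset.sum_congr rfl fun k hk => ?_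
  rw [ENNReal.toReal_mul, ENNReal.toReal_mul, ENNReal.toReal_pow, ENNReal.toReal_natCast,
    ENNReal.toReal_ofReal (by positivity), ENNReal.toReal_ofReal (hball_nonneg _),
    Nat.cast_sub (Finset.mem_range_succ_iff.mp hk), mul_pow]
  ring
end

section
/- For every γ > 0 there is n₀ such that for all n ≥ n₀ and all t with t ≥ (√(2/π) + γ) · √n · vol_n(B₁ⁿ)^{1/n} / vol_n(B₂ⁿ)^{1/n}, one has 1/2 ≤ vol_n( (B₂ⁿ / vol_n(B₂ⁿ)^{1/n}) ∩ t · (B₁ⁿ / vol_n(B₁ⁿ)^{1/n}) ) ≤ 1. -/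
/-!
Rescaled to volume one, `B₂ⁿ` becomes the ball of radius `R = vol(B₂ⁿ)^{-1/n}`, and the
intersection is the event `‖x‖₁ ≤ s := t / vol(B₁ⁿ)^{1/n}` for the uniform distribution on that
ball, where the hypothesis on `t` reads `s ≥ (√(2/π) + γ) √n R`.

Polar coordinates turn integrals of a degree-`d` homogeneous function over a ball into the same
integral against the Gaussian weight `exp (-‖x‖²)`, up to `R^{n+d} / Γ((n+d)/2 + 1)`; against the
Gaussian weight, `∏ |xᵢ|^{aᵢ}` factorizes into one-dimensional Gamma integrals. This gives
`E|xᵢ| = R Γ(n/2+1) / (√π Γ(n/2+3/2))` and `E|xᵢ||xⱼ| = R² Γ(n/2+1) / (π Γ(n/2+2))` for `i ≠ j`.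
Log-convexity of `Γ` then yields `E‖x‖₁ ≤ √(2n/π) R` and `Var ‖x‖₁ ≤ R²`, so by Chebyshev the
event `‖x‖₁ > s` has probability at most `1 / (γ² n) ≤ 1/2` once `n ≥ 2/γ²`.
-/

open MeasureTheory
open scoped Pointwise

/-- The Euclidean unit ball `B₂ⁿ`. -/
noncomputable def B2 (n : ℕ) : Set (EuclideanSpace ℝ (Fin n)) :=
  Metric.closedBall 0 1

/-- The cross-polytope `B₁ⁿ = {x : ∑|xᵢ| ≤ 1}`. -/
def B1 (n : ℕ) : Set (EuclideanSpace ℝ (Fin n)) :=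
  {x | ∑ i, |x i| ≤ 1}

open Real Set Metric Measure ProbabilityTheory Finset

theorem Gamma_add_half_sq_le_Gamma_mul_Gamma_add_one {x : ℝ} (hx : 0 < x) :
    Gamma (x + 1 / 2) ^ 2 ≤ Gamma x * Gamma (x + 1) := by
  have hconv := Gamma_mul_add_mul_le_rpow_Gamma_mul_rpow_Gamma hx (by linarith : 0 < x + 1)
    (by norm_num : (0 : ℝ) < 1 / 2) (by norm_num : (0 : ℝ) < 1 / 2) (by norm_num)
  rw [show 1 / 2 * x + 1 / 2 * (x + 1) = x + 1 / 2 by ring, ← sqrt_eq_rpow, ← sqrt_eq_rpow]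
    at hconv
  calc Gamma (x + 1 / 2) ^ 2 ≤ (√(Gamma x) * √(Gamma (x + 1))) ^ 2 := by
        gcongr
    _ = Gamma x * Gamma (x + 1) := by
        rw [mul_pow, sq_sqrt (Gamma_pos_of_pos hx).le, sq_sqrt (Gamma_pos_of_pos (by linarith)).le]

theorem mul_Gamma_add_one_sq_le_Gamma_add_three_halves_sq {x : ℝ} (hx : -(1 / 2) < x) :
    (x + 1 / 2) * Gamma (x + 1) ^ 2 ≤ Gamma (x + 3 / 2) ^ 2 := by
  have h := Gamma_add_half_sq_le_Gamma_mul_Gamma_add_one (by linarith : 0 < x + 1 / 2)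
  have hrec : Gamma (x + 3 / 2) = (x + 1 / 2) * Gamma (x + 1 / 2) := by
    rw [← Gamma_add_one (by linarith)]; ring_nf
  rw [show x + 1 / 2 + 1 / 2 = x + 1 by ring, show x + 1 / 2 + 1 = x + 3 / 2 by ring] at h
  calc (x + 1 / 2) * Gamma (x + 1) ^ 2
      ≤ (x + 1 / 2) * (Gamma (x + 1 / 2) * Gamma (x + 3 / 2)) := by gcongr; linarith
    _ = Gamma (x + 3 / 2) ^ 2 := by rw [hrec]; ring

theorem setIntegral_Ioi_pow_mul_exp_neg_sq (k : ℕ) :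
    ∫ r in Ioi (0 : ℝ), r ^ k * exp (-r ^ 2) = Gamma ((k + 1) / 2) / 2 := by
  have h := integral_rpow_mul_exp_neg_rpow (p := 2) (q := k) two_pos
    (neg_one_lt_zero.trans_le k.cast_nonneg)
  rw [one_div_mul_eq_div] at h
  rw [← h]
  refine setIntegral_congr_fun measurableSet_Ioi fun r _ => ?_
  norm_cast

theorem integral_abs_pow_mul_exp_neg_sq (k : ℕ) :
    ∫ u : ℝ, |u| ^ k * exp (-u ^ 2) = Gamma ((k + 1) / 2) := by
  have h := integral_comp_abs (f := fun r : ℝ => r ^ k * exp (-r ^ 2))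
  simp only [sq_abs] at h
  rw [h, setIntegral_Ioi_pow_mul_exp_neg_sq]
  ring

theorem setIntegral_Ioi_pow_mul_indicator_Iic (k : ℕ) {R : ℝ} (hR : 0 ≤ R) :
    ∫ r in Ioi (0 : ℝ), r ^ k * (Iic R).indicator 1 r = R ^ (k + 1) / (k + 1) := by
  have hind : ∀ r, r ^ k * (Iic R).indicator 1 r = (Iic R).indicator (· ^ k) r := by
    intro r
    by_cases hr : r ≤ R <;> simp [indicator, hr]
  simp_rw [hind]
  rw [integral_indicator measurableSet_Iic, Measure.restrict_restrict measurableSet_Iic,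
    Iic_inter_Ioi, ← intervalIntegral.integral_of_le hR, integral_pow]
  simp

section Polar

variable {E : Type*} [NormedAddCommGroup E] [NormedSpace ℝ E] [FiniteDimensional ℝ E]
  [MeasurableSpace E] [BorelSpace E] [Nontrivial E] (μ : Measure E) [μ.IsAddHaarMeasure]

theorem integral_eq_integral_toSphere_prod (f : E → ℝ) :
    ∫ x, f x ∂μ = ∫ p : sphere (0 : E) 1 × Ioi (0 : ℝ), f ((p.2 : ℝ) • (p.1 : E))
      ∂(μ.toSphere.prod (volumeIoiPow (Module.finrank ℝ E - 1))) := by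
  have hpunctured : ∫ x, f x ∂μ = ∫ x : ({0}ᶜ : Set E), f x ∂(μ.comap Subtype.val) := by
    rw [integral_subtype_comap (measurableSet_singleton 0).compl, restrict_compl_singleton]
  rw [hpunctured, ← (μ.measurePreserving_homeomorphUnitSphereProd).integral_comp
      (Homeomorph.measurableEmbedding _)]
  refine integral_congr_ae (Filter.Eventually.of_forall fun x => ?_)
  simp [homeomorphUnitSphereProd, smul_inv_smul₀ (norm_ne_zero_iff.2 x.2)]

theorem integral_mul_radial_of_homogeneous {h : E → ℝ} {d : ℕ}
    (hh : ∀ r : ℝ, 0 < r → ∀ x, h (r • x) = r ^ d * h x) (g : ℝ → ℝ) :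
    ∫ x, h x * g ‖x‖ ∂μ = (∫ θ : sphere (0 : E) 1, h θ ∂μ.toSphere) *
      ∫ r in Ioi (0 : ℝ), r ^ (Module.finrank ℝ E - 1 + d) * g r := by
  have hpolar : ∀ p : sphere (0 : E) 1 × Ioi (0 : ℝ),
      h ((p.2 : ℝ) • (p.1 : E)) * g ‖(p.2 : ℝ) • (p.1 : E)‖
        = h p.1 * ((p.2 : ℝ) ^ d * g p.2) := by
    rintro ⟨θ, r, hr⟩
    rw [hh r hr, norm_smul, norm_eq_abs, abs_of_pos hr, norm_eq_of_mem_sphere θ, mul_one]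
    ring
  rw [integral_eq_integral_toSphere_prod, integral_congr_ae (.of_forall hpolar),
    integral_prod_mul (f := fun θ : sphere (0 : E) 1 => h θ)
      (g := fun r : Ioi (0 : ℝ) => (r : ℝ) ^ d * g r),
    volumeIoiPow, integral_withDensity_eq_integral_toReal_smul (by fun_prop)
      (.of_forall fun _ => ENNReal.ofReal_lt_top), integral_subtype_comap measurableSet_Ioi
      (fun r : ℝ => (ENNReal.ofReal (r ^ _)).toReal • (r ^ d * g r))]
  congr 1
  refine setIntegral_congr_fun measurableSet_Ioi fun r hr => ?_
  rw [ENNReal.toReal_ofReal (pow_nonneg (le_of_lt hr) _), smul_eq_mul, pow_add]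
  ring

theorem setIntegral_closedBall_mul_Gamma_of_homogeneous {h : E → ℝ} {d : ℕ}
    (hh : ∀ r : ℝ, 0 < r → ∀ x, h (r • x) = r ^ d * h x) {R : ℝ} (hR : 0 ≤ R) :
    (∫ x in closedBall 0 R, h x ∂μ) * Gamma ((Module.finrank ℝ E + d) / 2 + 1)
      = R ^ (Module.finrank ℝ E + d) * ∫ x, h x * exp (-‖x‖ ^ 2) ∂μ := by
  have hdim := Module.finrank_pos (R := ℝ) (M := E)
  have hk : Module.finrank ℝ E - 1 + d + 1 = Module.finrank ℝ E + d := by omega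
  have hball : ∫ x in closedBall 0 R, h x ∂μ = ∫ x, h x * (Iic R).indicator 1 ‖x‖ ∂μ := by
    rw [← integral_indicator measurableSet_closedBall]
    congr 1 with x
    by_cases hx : ‖x‖ ≤ R <;> simp [indicator, hx]
  rw [hball, integral_mul_radial_of_homogeneous μ hh,
    integral_mul_radial_of_homogeneous μ hh (fun r => exp (-r ^ 2)),
    setIntegral_Ioi_pow_mul_indicator_Iic _ hR, setIntegral_Ioi_pow_mul_exp_neg_sq,
    ← Nat.cast_add_one, hk, Nat.cast_add, Gamma_add_one (by positivity)]
  field_simp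

end Polar

section Euclidean

variable {ι : Type*} [Fintype ι]

theorem integral_prod_abs_pow_mul_exp_neg_norm_sq (a : ι → ℕ) :
    ∫ x : EuclideanSpace ℝ ι, (∏ i, |x i| ^ a i) * exp (-‖x‖ ^ 2)
      = ∏ i, Gamma ((a i + 1) / 2) := by
  have hsplit : ∀ x : EuclideanSpace ℝ ι,
      (∏ i, |x i| ^ a i) * exp (-‖x‖ ^ 2) = ∏ i, |x i| ^ a i * exp (-x i ^ 2) := by
    intro x
    rw [EuclideanSpace.real_norm_sq_eq, ← sum_neg_distrib, exp_sum, prod_mul_distrib]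
  simp_rw [hsplit, ← integral_abs_pow_mul_exp_neg_sq]
  rw [← (PiLp.volume_preserving_toLp ι).integral_comp
    (MeasurableEquiv.toLp 2 (ι → ℝ)).measurableEmbedding]
  exact integral_fintype_prod_volume_eq_prod fun i u => |u| ^ a i * exp (-u ^ 2)

theorem setIntegral_closedBall_prod_abs_pow_mul_Gamma [Nonempty ι] (a : ι → ℕ) {R : ℝ}
    (hR : 0 ≤ R) :
    (∫ x in closedBall (0 : EuclideanSpace ℝ ι) R, ∏ i, |x i| ^ a i) *
        Gamma ((Fintype.card ι + ∑ i, a i) / 2 + 1)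
      = R ^ (Fintype.card ι + ∑ i, a i) * ∏ i, Gamma ((a i + 1) / 2) := by
  have hhom : ∀ r : ℝ, 0 < r → ∀ x : EuclideanSpace ℝ ι,
      ∏ i, |(r • x) i| ^ a i = r ^ (∑ i, a i) * ∏ i, |x i| ^ a i := by
    intro r hr x
    simp_rw [PiLp.smul_apply, smul_eq_mul, abs_mul, abs_of_pos hr, mul_pow, prod_mul_distrib,
      prod_pow_eq_pow_sum]
  have h := setIntegral_closedBall_mul_Gamma_of_homogeneous volume
    (h := fun x : EuclideanSpace ℝ ι => ∏ i, |x i| ^ a i) hhom hR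
  rw [finrank_euclideanSpace] at h
  rw [h, integral_prod_abs_pow_mul_exp_neg_norm_sq]

theorem setIntegral_closedBall_prod_abs_mul_Gamma [Nonempty ι] (T : Finset ι) {R : ℝ}
    (hR : 0 ≤ R) :
    (∫ x in closedBall (0 : EuclideanSpace ℝ ι) R, ∏ i ∈ T, |x i|) *
        Gamma ((Fintype.card ι + #T) / 2 + 1)
      = R ^ (Fintype.card ι + #T) * √π ^ (Fintype.card ι - #T) := by
  classical
  have h := setIntegral_closedBall_prod_abs_pow_mul_Gamma (fun i => if i ∈ T then 1 else 0) hR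
  have hΓ : ∀ i, Gamma (((if i ∈ T then 1 else 0 : ℕ) + 1) / 2) = if i ∈ T then 1 else √π := by
    intro i
    split_ifs <;> norm_num [Gamma_one_half_eq]
  simp only [hΓ, pow_ite, pow_one, pow_zero, prod_ite_mem, Finset.univ_inter, sum_boole,
    Finset.subset_univ, filter_mem_eq_of_subset, Nat.cast_id, prod_ite, prod_const_one,
    prod_const, one_mul] at h
  rwa [filter_notMem_eq_sdiff, card_univ_sdiff] at h

end Euclidean

theorem sq_sum_eq_sum_sq_add_sum_sum_erase {ι R : Type*} [Fintype ι] [DecidableEq ι]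
    [CommSemiring R] (f : ι → R) :
    (∑ i, f i) ^ 2 = ∑ i, f i ^ 2 + ∑ i, ∑ j ∈ univ.erase i, f i * f j := by
  rw [sq, sum_mul_sum, ← sum_add_distrib]
  exact sum_congr rfl fun i _ => by rw [← add_sum_erase _ _ (mem_univ i), sq]

noncomputable def uniformBall (ι : Type*) [Fintype ι] (R : ℝ) : Measure (EuclideanSpace ℝ ι) :=
  volume[|closedBall 0 R]

section UniformBall

variable {ι : Type*} [Fintype ι] {R : ℝ}

theorem isProbabilityMeasure_uniformBall (hR : 0 < R) :
    IsProbabilityMeasure (uniformBall ι R) :=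
  cond_isProbabilityMeasure_of_finite (measure_closedBall_pos volume 0 hR).ne'
    measure_closedBall_lt_top.ne

theorem integral_uniformBall (f : EuclideanSpace ℝ ι → ℝ) :
    ∫ x, f x ∂uniformBall ι R = (volume.real (closedBall (0 : EuclideanSpace ℝ ι) R))⁻¹ *
      ∫ x in closedBall 0 R, f x := by
  rw [uniformBall, ProbabilityTheory.cond, integral_smul_measure, ENNReal.toReal_inv, smul_eq_mul,
    measureReal_def]

theorem integrable_uniformBall {f : EuclideanSpace ℝ ι → ℝ} (hf : Continuous f)
    (hR : 0 < R) : Integrable f (uniformBall ι R) :=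
  (hf.continuousOn.integrableOn_compact (isCompact_closedBall 0 R)).smul_measure
    (ENNReal.inv_ne_top.2 (measure_closedBall_pos volume 0 hR).ne')

theorem integral_prod_abs_uniformBall [Nonempty ι] (T : Finset ι) (hR : 0 < R) :
    ∫ x, ∏ i ∈ T, |x i| ∂uniformBall ι R
      = R ^ #T * Gamma (Fintype.card ι / 2 + 1) /
          (√π ^ #T * Gamma ((Fintype.card ι + #T) / 2 + 1)) := by
  have hvol := setIntegral_closedBall_prod_abs_mul_Gamma (ι := ι) ∅ hR.le
  have hT := setIntegral_closedBall_prod_abs_mul_Gamma T hR.le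
  simp only [Finset.prod_empty, setIntegral_const, smul_eq_mul, mul_one, Finset.card_empty,
    Nat.cast_zero, add_zero, Nat.sub_zero] at hvol
  have hΓ₀ := Gamma_pos_of_pos (by positivity : (0 : ℝ) < Fintype.card ι / 2 + 1)
  have hΓ := Gamma_pos_of_pos (by positivity : (0 : ℝ) < (Fintype.card ι + #T) / 2 + 1)
  have hπ : 0 < √π := sqrt_pos.2 pi_pos
  rw [pow_sub₀ _ hπ.ne' (card_le_univ T)] at hT
  rw [← eq_div_iff hΓ₀.ne'] at hvol
  rw [integral_uniformBall, eq_div_iff (by positivity)]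
  calc _ = (∫ x in closedBall (0 : EuclideanSpace ℝ ι) R, ∏ i ∈ T, |x i|) *
        Gamma ((Fintype.card ι + #T) / 2 + 1) * √π ^ #T /
          volume.real (closedBall (0 : EuclideanSpace ℝ ι) R) := by ring
    _ = _ := by
      rw [hT, hvol, pow_add]
      field_simp

theorem integral_abs_uniformBall [Nonempty ι] (i : ι) (hR : 0 < R) :
    ∫ x, |x i| ∂uniformBall ι R
      = R * Gamma (Fintype.card ι / 2 + 1) / (√π * Gamma ((Fintype.card ι + 1) / 2 + 1)) := by
  simpa using integral_prod_abs_uniformBall {i} hR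

theorem integral_abs_mul_abs_uniformBall [Nonempty ι] {i j : ι} (hij : i ≠ j) (hR : 0 < R) :
    ∫ x, |x i| * |x j| ∂uniformBall ι R
      = R ^ 2 * Gamma (Fintype.card ι / 2 + 1) / (π * Gamma ((Fintype.card ι + 2) / 2 + 1)) := by
  classical
  simpa [prod_pair hij, card_pair hij, sq_sqrt pi_pos.le] using
    integral_prod_abs_uniformBall {i, j} hR

theorem integral_sum_abs_uniformBall [Nonempty ι] (hR : 0 < R) :
    ∫ x, ∑ i, |x i| ∂uniformBall ι R = Fintype.card ι *
      (R * Gamma (Fintype.card ι / 2 + 1) / (√π * Gamma ((Fintype.card ι + 1) / 2 + 1))) := by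
  rw [integral_finsetSum _ fun i _ => integrable_uniformBall (by fun_prop) hR]
  simp [integral_abs_uniformBall _ hR]

theorem integral_sq_sum_abs_uniformBall_le [Nonempty ι] (hR : 0 < R) :
    ∫ x, (∑ i, |x i|) ^ 2 ∂uniformBall ι R ≤ R ^ 2 + Fintype.card ι * (Fintype.card ι - 1) *
      (R ^ 2 * Gamma (Fintype.card ι / 2 + 1) / (π * Gamma ((Fintype.card ι + 2) / 2 + 1))) := by
  classical
  have := isProbabilityMeasure_uniformBall (ι := ι) hR
  have hcross : Integrable (fun x : EuclideanSpace ℝ ι =>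
      ∑ i, ∑ j ∈ univ.erase i, |x i| * |x j|) (uniformBall ι R) :=
    integrable_uniformBall (by fun_prop) hR
  have hnorm : ∫ x, ‖x‖ ^ 2 ∂uniformBall ι R ≤ R ^ 2 := by
    have hle : ∀ᵐ x ∂uniformBall ι R, ‖x‖ ^ 2 ≤ R ^ 2 := by
      filter_upwards [ae_cond_mem measurableSet_closedBall] with x hx
      exact pow_le_pow_left₀ (norm_nonneg x) (mem_closedBall_zero_iff.1 hx) 2
    simpa using integral_mono_ae (integrable_uniformBall (by fun_prop) hR) (integrable_const _) hle
  -- The diagonal terms add up to `‖x‖² ≤ R²`; only the mixed moments have to be computed.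
  simp_rw [sq_sum_eq_sum_sq_add_sum_sum_erase, sq_abs, ← EuclideanSpace.real_norm_sq_eq]
  have hsum : ∫ x, ∑ i, ∑ j ∈ univ.erase i, |x i| * |x j| ∂uniformBall ι R
      = Fintype.card ι * (Fintype.card ι - 1) *
        (R ^ 2 * Gamma (Fintype.card ι / 2 + 1) / (π * Gamma ((Fintype.card ι + 2) / 2 + 1))) := by
    rw [integral_finsetSum _ fun i _ => integrable_uniformBall (by fun_prop) hR]
    have hinner : ∀ i, ∫ x, ∑ j ∈ univ.erase i, |x i| * |x j| ∂uniformBall ι R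
        = (Fintype.card ι - 1) *
          (R ^ 2 * Gamma (Fintype.card ι / 2 + 1) / (π * Gamma ((Fintype.card ι + 2) / 2 + 1))) := by
      intro i
      rw [integral_finsetSum _ fun j _ => integrable_uniformBall (by fun_prop) hR,
        sum_congr rfl fun j hj => integral_abs_mul_abs_uniformBall (ne_of_mem_erase hj).symm hR]
      simp [card_erase_of_mem, Nat.cast_pred Fintype.card_pos]
    simp only [hinner, sum_const, card_univ, nsmul_eq_mul]
    ring
  rw [integral_add (integrable_uniformBall (by fun_prop) hR) hcross, hsum]
  linarith

theorem integral_sum_abs_uniformBall_le [Nonempty ι] (hR : 0 < R) :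
    ∫ x, ∑ i, |x i| ∂uniformBall ι R ≤ √(2 / π) * √(Fintype.card ι) * R := by
  rw [integral_sum_abs_uniformBall hR, ← mul_div_assoc, div_le_iff₀ (by positivity)]
  set n : ℝ := (Fintype.card ι : ℝ)
  have hn : 0 ≤ n := Nat.cast_nonneg _
  have hΓ₁ := Gamma_pos_of_pos (by positivity : (0 : ℝ) < n / 2 + 1)
  have hΓ₃ := Gamma_pos_of_pos (by positivity : (0 : ℝ) < (n + 1) / 2 + 1)
  have hπ := sqrt_pos.2 pi_pos
  have hgautschi := mul_Gamma_add_one_sq_le_Gamma_add_three_halves_sq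
    (by linarith : -(1 / 2) < n / 2)
  rw [show n / 2 + 3 / 2 = (n + 1) / 2 + 1 by ring] at hgautschi
  have hsq : (√(2 / π) * √n * R * (√π * Gamma ((n + 1) / 2 + 1))) ^ 2
      = 2 * n * R ^ 2 * Gamma ((n + 1) / 2 + 1) ^ 2 := by
    simp only [mul_pow, sq_sqrt (by positivity : 0 ≤ 2 / π), sq_sqrt hn, sq_sqrt pi_pos.le]
    field_simp
  refine le_of_pow_le_pow_left₀ two_ne_zero (by positivity) ?_
  rw [hsq]
  have := mul_le_mul_of_nonneg_left hgautschi (by positivity : 0 ≤ 2 * n * R ^ 2)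
  nlinarith [mul_nonneg hn (mul_nonneg (sq_nonneg R) (sq_nonneg (Gamma (n / 2 + 1))))]

theorem variance_sum_abs_uniformBall_le [Nonempty ι] (hR : 0 < R) :
    Var[fun x => ∑ i, |x i|; uniformBall ι R] ≤ R ^ 2 := by
  have := isProbabilityMeasure_uniformBall (ι := ι) hR
  have hL2 : MemLp (fun x : EuclideanSpace ℝ ι => ∑ i, |x i|) 2 (uniformBall ι R) :=
    (memLp_two_iff_integrable_sq (by fun_prop)).2 (integrable_uniformBall (by fun_prop) hR)
  have hsecond := integral_sq_sum_abs_uniformBall_le (ι := ι) hR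
  rw [variance_eq_sub hL2, integral_sum_abs_uniformBall hR]
  simp only [Pi.pow_apply]
  set n : ℝ := (Fintype.card ι : ℝ)
  have hn : 1 ≤ n := Nat.one_le_cast.2 Fintype.card_pos
  have hΓ₁ := Gamma_pos_of_pos (by positivity : (0 : ℝ) < n / 2 + 1)
  have hΓ₂ := Gamma_pos_of_pos (by positivity : (0 : ℝ) < (n + 2) / 2 + 1)
  have hΓ₃ := Gamma_pos_of_pos (by positivity : (0 : ℝ) < (n + 1) / 2 + 1)
  have hlogconv := Gamma_add_half_sq_le_Gamma_mul_Gamma_add_one (by positivity : (0 : ℝ) < n / 2 + 1)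
  rw [show n / 2 + 1 + 1 / 2 = (n + 1) / 2 + 1 by ring,
    show n / 2 + 1 + 1 = (n + 2) / 2 + 1 by ring] at hlogconv
  have hratio : (n - 1) / Gamma ((n + 2) / 2 + 1)
      ≤ n * Gamma (n / 2 + 1) / Gamma ((n + 1) / 2 + 1) ^ 2 := by
    rw [div_le_div_iff₀ hΓ₂ (by positivity)]
    nlinarith [mul_le_mul_of_nonneg_left hlogconv (by linarith : 0 ≤ n - 1),
      mul_pos hΓ₁ hΓ₂]
  have hcross : n * (n - 1) * (R ^ 2 * Gamma (n / 2 + 1) / (π * Gamma ((n + 2) / 2 + 1)))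
      ≤ (n * (R * Gamma (n / 2 + 1) / (√π * Gamma ((n + 1) / 2 + 1)))) ^ 2 :=
    calc _ = n * R ^ 2 * Gamma (n / 2 + 1) / π * ((n - 1) / Gamma ((n + 2) / 2 + 1)) := by ring
      _ ≤ n * R ^ 2 * Gamma (n / 2 + 1) / π *
          (n * Gamma (n / 2 + 1) / Gamma ((n + 1) / 2 + 1) ^ 2) := by gcongr
      _ = _ := by
        rw [mul_pow, div_pow, mul_pow, mul_pow, sq_sqrt pi_pos.le]
        ring
  linarith

theorem one_sub_sq_div_sq_le_uniformBall_sum_abs_le [Nonempty ι] (hR : 0 < R) {c s : ℝ}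
    (hc : 0 < c) (hs : √(2 / π) * √(Fintype.card ι) * R + c ≤ s) :
    1 - R ^ 2 / c ^ 2 ≤ (uniformBall ι R).real {x | ∑ i, |x i| ≤ s} := by
  have := isProbabilityMeasure_uniformBall (ι := ι) hR
  have hL2 : MemLp (fun x : EuclideanSpace ℝ ι => ∑ i, |x i|) 2 (uniformBall ι R) :=
    (memLp_two_iff_integrable_sq (by fun_prop)).2 (integrable_uniformBall (by fun_prop) hR)
  have hdeviation : {x : EuclideanSpace ℝ ι | ∑ i, |x i| ≤ s}ᶜ ⊆
      {x | c ≤ |∑ i, |x i| - ∫ y, ∑ i, |y i| ∂uniformBall ι R|} := by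
    intro x hx
    have hmean := integral_sum_abs_uniformBall_le (ι := ι) hR
    simp only [mem_compl_iff, mem_ofPred_eq, not_le] at hx ⊢
    exact le_abs.2 (Or.inl (by linarith))
  have hchebyshev :
      (uniformBall ι R).real {x : EuclideanSpace ℝ ι | ∑ i, |x i| ≤ s}ᶜ ≤ R ^ 2 / c ^ 2 :=
    (measureReal_mono hdeviation).trans <| ENNReal.toReal_le_of_le_ofReal (by positivity) <|
      (meas_ge_le_variance_div_sq hL2 hc).trans <| ENNReal.ofReal_le_ofReal <|
        div_le_div_of_nonneg_right (variance_sum_abs_uniformBall_le hR) (sq_nonneg c)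
  rw [probReal_compl_eq_one_sub (measurableSet_le (by fun_prop) measurable_const)] at hchebyshev
  linarith

theorem half_le_volume_closedBall_inter_sum_abs_le [Nonempty ι] {γ s : ℝ} (hγ : 0 < γ)
    (hR : 0 < R) (hγn : 2 ≤ γ ^ 2 * Fintype.card ι)
    (hvol : volume (closedBall (0 : EuclideanSpace ℝ ι) R) = 1)
    (hs : (√(2 / π) + γ) * √(Fintype.card ι) * R ≤ s) :
    1 / 2 ≤ (volume (closedBall 0 R ∩ {x : EuclideanSpace ℝ ι | ∑ i, |x i| ≤ s})).toReal := by
  have hn : (0 : ℝ) < Fintype.card ι := Nat.cast_pos.2 Fintype.card_pos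
  have hconc := one_sub_sq_div_sq_le_uniformBall_sum_abs_le hR (c := γ * √(Fintype.card ι) * R)
    (by positivity) ((le_of_eq (by ring)).trans hs)
  rw [uniformBall, measureReal_def, cond_apply measurableSet_closedBall, hvol, inv_one,
    one_mul] at hconc
  have hdev : R ^ 2 / (γ * √(Fintype.card ι) * R) ^ 2 ≤ 1 / 2 := by
    rw [mul_pow, mul_pow, sq_sqrt hn.le, div_le_div_iff₀ (by positivity) two_pos]
    nlinarith [sq_nonneg R]
  linarith

end UniformBall

theorem addHaar_inv_rpow_smul_self {E : Type*} [NormedAddCommGroup E] [NormedSpace ℝ E]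
    [FiniteDimensional ℝ E] [MeasurableSpace E] [BorelSpace E] (μ : Measure E)
    [μ.IsAddHaarMeasure] (hE : 0 < Module.finrank ℝ E) {K : Set E} (h0 : μ K ≠ 0)
    (htop : μ K ≠ ⊤) :
    μ (((μ K).toReal ^ (1 / (Module.finrank ℝ E : ℝ)))⁻¹ • K) = 1 := by
  have hK : 0 < (μ K).toReal := ENNReal.toReal_pos h0 htop
  rw [addHaar_smul, abs_of_pos (by positivity), inv_pow, ← rpow_natCast,
    ← rpow_mul hK.le, one_div_mul_cancel (by positivity), rpow_one, ENNReal.ofReal_inv_of_pos hK,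
    ENNReal.ofReal_toReal htop, ENNReal.inv_mul_cancel h0 htop]

theorem smul_B1 {n : ℕ} {c : ℝ} (hc : 0 < c) : c • B1 n = {x | ∑ i, |x i| ≤ c} := by
  ext x
  rw [mem_smul_set_iff_inv_smul_mem₀ hc.ne', B1, mem_ofPred_eq, mem_ofPred_eq]
  simp_rw [PiLp.smul_apply, smul_eq_mul, abs_mul, abs_inv, abs_of_pos hc, ← mul_sum,
    inv_mul_le_iff₀ hc, mul_one]

theorem volume_B1_pos (n : ℕ) : 0 < volume (B1 n) := by
  have hopen : IsOpen {x : EuclideanSpace ℝ (Fin n) | ∑ i, |x i| < 1} :=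
    isOpen_lt (by fun_prop) continuous_const
  exact (hopen.measure_pos volume ⟨0, by simp⟩).trans_le
    (measure_mono fun x (hx : ∑ i, |x i| < 1) => hx.le)

theorem B1_subset_closedBall (n : ℕ) : B1 n ⊆ closedBall 0 1 := by
  intro x (hx : ∑ i, |x i| ≤ 1)
  have hsum : 0 ≤ ∑ i, |x i| := sum_nonneg fun i _ => abs_nonneg (x i)
  rw [mem_closedBall_zero_iff, EuclideanSpace.norm_eq, sqrt_le_left zero_le_one]
  calc ∑ i, ‖x i‖ ^ 2 = ∑ i, |x i| ^ 2 := by simp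
    _ ≤ (∑ i, |x i|) ^ 2 := sum_sq_le_sq_sum_of_nonneg fun i _ => abs_nonneg (x i)
    _ ≤ 1 ^ 2 := by gcongr

/-- For every `γ > 0` there is `n₀` such that for all `n ≥ n₀` and all
`t ≥ (√(2/π) + γ)·√n·vol(B₁ⁿ)^{1/n}/vol(B₂ⁿ)^{1/n}`, the volume of
`(B₂ⁿ/vol(B₂ⁿ)^{1/n}) ∩ t(B₁ⁿ/vol(B₁ⁿ)^{1/n})` lies between `1/2` and `1`. -/
theorem volume_normBall_inter_normCross :
    ∀ γ > (0 : ℝ), ∃ n₀ : ℕ, ∀ n ≥ n₀, ∀ t : ℝ,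
      (Real.sqrt (2 / Real.pi) + γ) * Real.sqrt n *
          (volume (B1 n)).toReal ^ (1 / (n : ℝ)) / (volume (B2 n)).toReal ^ (1 / (n : ℝ)) ≤ t →
      (1 / 2 : ℝ) ≤
          (volume ((((volume (B2 n)).toReal ^ (1 / (n : ℝ)))⁻¹ • B2 n) ∩
            t • (((volume (B1 n)).toReal ^ (1 / (n : ℝ)))⁻¹ • B1 n))).toReal ∧
        (volume ((((volume (B2 n)).toReal ^ (1 / (n : ℝ)))⁻¹ • B2 n) ∩
            t • (((volume (B1 n)).toReal ^ (1 / (n : ℝ)))⁻¹ • B1 n))).toReal ≤ 1 := by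
  intro γ hγ
  refine ⟨⌈2 / γ ^ 2⌉₊ + 1, fun n hn t ht => ?_⟩
  have hn₀ : 0 < n := by omega
  have : Nonempty (Fin n) := ⟨⟨0, hn₀⟩⟩
  have hγn : 2 ≤ γ ^ 2 * Fintype.card (Fin n) := by
    have := (Nat.le_ceil (2 / γ ^ 2)).trans (Nat.cast_le.2 (Nat.le_of_succ_le hn))
    rwa [div_le_iff₀ (by positivity), mul_comm, ← Fintype.card_fin n] at this
  have hB2 : volume (B2 n) ≠ 0 := (measure_closedBall_pos volume 0 one_pos).ne'
  have hvol := addHaar_inv_rpow_smul_self volume (by simpa using hn₀) hB2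
    measure_closedBall_lt_top.ne
  simp only [finrank_euclideanSpace, Fintype.card_fin] at hvol
  have hc₁ : 0 < (volume (B1 n)).toReal ^ (1 / (n : ℝ)) :=
    rpow_pos_of_pos (ENNReal.toReal_pos (volume_B1_pos n).ne'
      ((measure_mono (B1_subset_closedBall n)).trans_lt measure_closedBall_lt_top).ne) _
  have hc₂ : 0 < (volume (B2 n)).toReal ^ (1 / (n : ℝ)) :=
    rpow_pos_of_pos (ENNReal.toReal_pos hB2 measure_closedBall_lt_top.ne) _
  set c₁ := (volume (B1 n)).toReal ^ (1 / (n : ℝ))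
  set c₂ := (volume (B2 n)).toReal ^ (1 / (n : ℝ))
  refine ⟨?_, ENNReal.toReal_le_of_le_ofReal zero_le_one ?_⟩
  · rw [B2, smul_unitClosedBall, norm_inv, norm_of_nonneg hc₂.le] at hvol ⊢
    rw [smul_smul, smul_B1 (mul_pos ((by positivity : (0 : ℝ) < _).trans_le ht) (inv_pos.2 hc₁))]
    refine half_le_volume_closedBall_inter_sum_abs_le hγ (inv_pos.2 hc₂) hγn hvol ?_
    rw [Fintype.card_fin, ← div_eq_mul_inv t, le_div_iff₀ hc₁]
    calc _ = (√(2 / π) + γ) * √n * c₁ / c₂ := by ring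
      _ ≤ t := ht
  · rw [ENNReal.ofReal_one, ← hvol]
    exact measure_mono inter_subset_left
end

section
/- For every γ > 0 there is n₀ such that for all n ≥ n₀ and all s with s ≥ ((√2 + γ)/√n) · vol_n(B₂ⁿ)^{1/n} / vol_n(B₁ⁿ)^{1/n}, one has 1/2 ≤ vol_n( (B₁ⁿ / vol_n(B₁ⁿ)^{1/n}) ∩ s · (B₂ⁿ / vol_n(B₂ⁿ)^{1/n}) ) ≤ 1. -/
/-!
After the two normalisations the claim says that at least half of the volume of `B₁ⁿ` lies in the
Euclidean ball of radius `t ≥ (√2 + γ)/√n`. For `g ≥ 0` homogeneous of degree `d`, integrating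
`e^{-r} = ∫_r^∞ e^{-u} du` against the sublevel sets of `‖·‖₁` gives
`∫ g e^{-‖x‖₁} dx = (n + d)! ∫_{B₁ⁿ} g`, and the left side factorises into one-dimensional Gamma
integrals. This yields the moments of `‖x‖²` over `B₁ⁿ`, so `‖x‖²` is concentrated at `2/n`:
`∫_{B₁ⁿ} (‖x‖² - 2/n)² ≤ 5 vol(B₁ⁿ)/n³`. Chebyshev's inequality then bounds the part of `B₁ⁿ`
where `‖x‖² ≥ (√2 + γ)²/n` by `vol(B₁ⁿ)/2` once `n` is large.
-/

open MeasureTheory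
open scoped Pointwise

open Set Real Module
open scoped ENNReal Nat

-- A non-integrable function has Bochner integral `0`, so `c ≠ 0` already gives integrability.
theorem lintegral_ofReal_eq_of_integral_eq {α : Type*} [MeasurableSpace α] {μ : Measure α}
    {f : α → ℝ} {c : ℝ} (hf : 0 ≤ᵐ[μ] f) (h : ∫ x, f x ∂μ = c) (hc : c ≠ 0) :
    ∫⁻ x, ENNReal.ofReal (f x) ∂μ = ENNReal.ofReal c := by
  rw [← ofReal_integral_eq_lintegral_ofReal (Integrable.of_integral_ne_zero (h ▸ hc)) hf, h]

theorem integral_Ioi_pow_mul_exp_neg (m : ℕ) :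
    ∫ r in Ioi (0 : ℝ), r ^ m * exp (-r) = m ! := by
  rw [← Real.Gamma_nat_eq_factorial, Real.Gamma_eq_integral (by positivity)]
  refine setIntegral_congr_fun measurableSet_Ioi fun r _ => ?_
  rw [add_sub_cancel_right, Real.rpow_natCast, mul_comm]

theorem lintegral_Ioi_pow_mul_exp_neg (m : ℕ) :
    ∫⁻ r in Ioi (0 : ℝ), ENNReal.ofReal (r ^ m * exp (-r)) = m ! := by
  rw [← ENNReal.ofReal_natCast]
  refine lintegral_ofReal_eq_of_integral_eq ?_ (integral_Ioi_pow_mul_exp_neg m) (by positivity)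
  filter_upwards [ae_restrict_mem measurableSet_Ioi] with r hr
  have : (0 : ℝ) < r := hr
  positivity

theorem lintegral_Ici_exp_neg (s : ℝ) :
    ∫⁻ r in Ici s, ENNReal.ofReal (exp (-r)) = ENNReal.ofReal (exp (-s)) := by
  rw [← restrict_Ioi_eq_restrict_Ici]
  exact lintegral_ofReal_eq_of_integral_eq (ae_of_all _ fun r => (exp_pos _).le)
    (integral_exp_neg_Ioi s) (exp_pos _).ne'

theorem setLIntegral_Ioi_zero_indicator_Ici {s : ℝ} (hs : 0 ≤ s) (f : ℝ → ℝ≥0∞) :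
    ∫⁻ r in Ioi 0, (Ici s).indicator f r = ∫⁻ r in Ici s, f r := by
  rw [restrict_Ioi_eq_restrict_Ici, lintegral_indicator measurableSet_Ici,
    Measure.restrict_restrict measurableSet_Ici, inter_eq_left.2 (Ici_subset_Ici.2 hs)]

theorem integral_pow_two_mul_mul_exp_neg_abs (k : ℕ) :
    ∫ t : ℝ, t ^ (2 * k) * exp (-|t|) = 2 * (2 * k)! := by
  have h : ∀ t : ℝ, t ^ (2 * k) * exp (-|t|) = |t| ^ (2 * k) * exp (-|t|) := fun t => by
    rw [pow_mul, pow_mul, sq_abs]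
  simp_rw [h]
  rw [integral_comp_abs (f := fun t => t ^ (2 * k) * exp (-t)), integral_Ioi_pow_mul_exp_neg]

section Homogeneous

variable {E : Type*} [NormedAddCommGroup E] [NormedSpace ℝ E] [FiniteDimensional ℝ E]
  [MeasurableSpace E] [BorelSpace E] (μ : Measure E) [μ.IsAddHaarMeasure] {N : E → ℝ} {d : ℕ}

theorem setLIntegral_sublevel_eq_pow_mul {g : E → ℝ≥0∞} (hN : Measurable N)
    (hNsmul : ∀ c : ℝ, 0 < c → ∀ x, N (c • x) = c * N x) (hg : Measurable g)
    (hgsmul : ∀ c : ℝ, 0 < c → ∀ x, g (c • x) = ENNReal.ofReal (c ^ d) * g x) {r : ℝ}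
    (hr : 0 < r) :
    ∫⁻ x in {x | N x ≤ r}, g x ∂μ =
      ENNReal.ofReal (r ^ (finrank ℝ E + d)) * ∫⁻ x in {x | N x ≤ 1}, g x ∂μ := by
  have hpre : (r • ·) ⁻¹' {x | N x ≤ r} = {x | N x ≤ 1} := by
    ext x
    simp [hNsmul r hr, mul_le_iff_le_one_right hr]
  have key := setLIntegral_map (μ := μ) (measurableSet_le hN (measurable_const (a := r))) hg
    (measurable_const_smul r)
  rw [Measure.map_addHaar_smul μ hr.ne', Measure.restrict_smul, lintegral_smul_measure, hpre,
    abs_of_pos (by positivity)] at key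
  simp_rw [hgsmul r hr] at key
  rw [lintegral_const_mul _ hg] at key
  rw [pow_add, ENNReal.ofReal_mul (by positivity), mul_assoc, ← key, smul_eq_mul, ← mul_assoc,
    ← ENNReal.ofReal_mul (by positivity), mul_inv_cancel₀ (by positivity), ENNReal.ofReal_one,
    one_mul]

theorem lintegral_mul_exp_neg_eq_factorial_mul {g : E → ℝ≥0∞} (hN : Measurable N)
    (hN0 : ∀ x, 0 ≤ N x) (hNsmul : ∀ c : ℝ, 0 < c → ∀ x, N (c • x) = c * N x)
    (hg : Measurable g)
    (hgsmul : ∀ c : ℝ, 0 < c → ∀ x, g (c • x) = ENNReal.ofReal (c ^ d) * g x) :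
    ∫⁻ x, g x * ENNReal.ofReal (exp (-N x)) ∂μ =
      (finrank ℝ E + d)! * ∫⁻ x in {x | N x ≤ 1}, g x ∂μ := by
  set F : E × ℝ → ℝ≥0∞ :=
    {p | N p.1 ≤ p.2}.indicator fun p => g p.1 * ENNReal.ofReal (exp (-p.2))
  have hF : Measurable F :=
    ((hg.comp measurable_fst).mul (by fun_prop)).indicator
      (measurableSet_le (hN.comp measurable_fst) measurable_snd)
  have hFx : ∀ x, ∫⁻ r in Ioi 0, F (x, r) = g x * ENNReal.ofReal (exp (-N x)) := fun x => by
    have : (fun r => F (x, r)) =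
        (Ici (N x)).indicator fun r => g x * ENNReal.ofReal (exp (-r)) := by
      ext r; simp [F, indicator_apply]
    rw [this, setLIntegral_Ioi_zero_indicator_Ici (hN0 x), lintegral_const_mul _ (by fun_prop),
      lintegral_Ici_exp_neg]
  have hFr : ∀ r, ∫⁻ x, F (x, r) ∂μ =
      ENNReal.ofReal (exp (-r)) * ∫⁻ x in {x | N x ≤ r}, g x ∂μ := fun r => by
    have : (fun x => F (x, r)) =
        {x | N x ≤ r}.indicator fun x => ENNReal.ofReal (exp (-r)) * g x := by
      ext x; simp [F, indicator_apply, mul_comm]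
    rw [this, lintegral_indicator (measurableSet_le hN measurable_const), lintegral_const_mul _ hg]
  calc ∫⁻ x, g x * ENNReal.ofReal (exp (-N x)) ∂μ
      = ∫⁻ r in Ioi 0, ∫⁻ x, F (x, r) ∂μ := by
        simp_rw [← hFx]
        exact lintegral_lintegral_swap hF.aemeasurable
    _ = ∫⁻ r in Ioi 0, ENNReal.ofReal (r ^ (finrank ℝ E + d) * exp (-r)) *
          ∫⁻ x in {x | N x ≤ 1}, g x ∂μ := by
        refine setLIntegral_congr_fun measurableSet_Ioi fun r hr => ?_
        rw [hFr, setLIntegral_sublevel_eq_pow_mul μ hN hNsmul hg hgsmul hr, ← mul_assoc,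
          ← ENNReal.ofReal_mul (exp_pos _).le, mul_comm (exp _)]
    _ = (finrank ℝ E + d)! * ∫⁻ x in {x | N x ≤ 1}, g x ∂μ := by
        rw [lintegral_mul_const _ (by fun_prop), lintegral_Ioi_pow_mul_exp_neg]

theorem integral_mul_exp_neg_eq_factorial_mul {g : E → ℝ} (hN : Measurable N)
    (hN0 : ∀ x, 0 ≤ N x) (hNsmul : ∀ c : ℝ, 0 < c → ∀ x, N (c • x) = c * N x)
    (hg : Measurable g) (hg0 : ∀ x, 0 ≤ g x)
    (hgsmul : ∀ c : ℝ, 0 < c → ∀ x, g (c • x) = c ^ d * g x) :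
    ∫ x, g x * exp (-N x) ∂μ = (finrank ℝ E + d)! * ∫ x in {x | N x ≤ 1}, g x ∂μ := by
  have h := lintegral_mul_exp_neg_eq_factorial_mul μ hN hN0 hNsmul hg.ennreal_ofReal
    fun c hc x => by rw [hgsmul c hc, ENNReal.ofReal_mul (by positivity)]
  rw [integral_eq_lintegral_of_nonneg_ae (ae_of_all _ fun x => by have := hg0 x; positivity)
      (by fun_prop),
    integral_eq_lintegral_of_nonneg_ae (ae_of_all _ hg0) hg.aestronglyMeasurable]
  simp_rw [ENNReal.ofReal_mul (hg0 _), h, ENNReal.toReal_mul, ENNReal.toReal_natCast]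

theorem measureReal_inv_rpow_smul (hE : finrank ℝ E ≠ 0) (A S : Set E) :
    μ.real ((μ.real A ^ (1 / (finrank ℝ E : ℝ)))⁻¹ • S) = μ.real S / μ.real A := by
  rw [measureReal_def, Measure.addHaar_smul, ENNReal.toReal_mul,
    ENNReal.toReal_ofReal (abs_nonneg _), inv_pow, one_div,
    Real.rpow_inv_natCast_pow measureReal_nonneg hE, abs_inv, abs_of_nonneg measureReal_nonneg,
    ← measureReal_def, div_eq_inv_mul]

end Homogeneous

section LaplaceMoments

variable {ι : Type*} [Fintype ι]

theorem integral_prod_pow_two_mul_mul_exp_neg_sum_abs (e : ι → ℕ) :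
    ∫ x : ι → ℝ, (∏ i, x i ^ (2 * e i)) * exp (-∑ i, |x i|) =
      2 ^ Fintype.card ι * ∏ i, ((2 * e i)! : ℝ) := by
  have h : ∀ x : ι → ℝ, (∏ i, x i ^ (2 * e i)) * exp (-∑ i, |x i|) =
      ∏ i, x i ^ (2 * e i) * exp (-|x i|) := fun x => by
    rw [Finset.prod_mul_distrib, ← Finset.sum_neg_distrib, Real.exp_sum]
  simp_rw [h]
  rw [integral_fintype_prod_volume_eq_prod (fun i t => t ^ (2 * e i) * exp (-|t|))]
  simp_rw [integral_pow_two_mul_mul_exp_neg_abs, Finset.prod_mul_distrib, Finset.prod_const,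
    Finset.card_univ]

theorem integrable_prod_pow_two_mul_mul_exp_neg_sum_abs (e : ι → ℕ) :
    Integrable fun x : ι → ℝ => (∏ i, x i ^ (2 * e i)) * exp (-∑ i, |x i|) := by
  refine Integrable.of_integral_ne_zero ?_
  rw [integral_prod_pow_two_mul_mul_exp_neg_sum_abs]
  positivity

theorem integral_exp_neg_sum_abs :
    ∫ x : ι → ℝ, exp (-∑ i, |x i|) = 2 ^ Fintype.card ι := by
  simpa using integral_prod_pow_two_mul_mul_exp_neg_sum_abs (fun _ : ι => 0)

variable [DecidableEq ι]

theorem prod_pow_two_mul_single (x : ι → ℝ) (i : ι) :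
    ∏ l, x l ^ (2 * (Pi.single i 1 : ι → ℕ) l) = x i ^ 2 := by
  rw [Fintype.prod_eq_single i fun l hl => by simp [hl]]
  simp

theorem prod_factorial_two_mul_single (i : ι) :
    ∏ l, ((2 * (Pi.single i 1 : ι → ℕ) l)! : ℝ) = 2 := by
  rw [Fintype.prod_eq_single i fun l hl => by simp [hl]]
  simp

theorem prod_factorial_two_mul_single_add_single (i j : ι) :
    ∏ l, ((2 * (Pi.single i 1 + Pi.single j 1 : ι → ℕ) l)! : ℝ) = if i = j then 24 else 4 := by
  split_ifs with h
  · subst h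
    rw [Fintype.prod_eq_single i fun l hl => by simp [hl]]
    simp [Nat.factorial]
  · have hsplit : ∀ l, ((2 * (Pi.single i 1 + Pi.single j 1 : ι → ℕ) l)! : ℝ) =
        (2 * (Pi.single i 1 : ι → ℕ) l)! * (2 * (Pi.single j 1 : ι → ℕ) l)! := by
      intro l
      by_cases hi : l = i
      · subst hi; simp [Ne.symm h]
      · by_cases hj : l = j
        · subst hj; simp [hi]
        · simp [hi, hj]
    simp_rw [hsplit, Finset.prod_mul_distrib, prod_factorial_two_mul_single]
    norm_num

theorem integral_sum_sq_mul_exp_neg_sum_abs :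
    ∫ x : ι → ℝ, (∑ i, x i ^ 2) * exp (-∑ i, |x i|) =
      2 ^ Fintype.card ι * (2 * Fintype.card ι) := by
  have h : ∀ x : ι → ℝ, (∑ i, x i ^ 2) * exp (-∑ i, |x i|) =
      ∑ i, (∏ l, x l ^ (2 * (Pi.single i 1 : ι → ℕ) l)) * exp (-∑ l, |x l|) := fun x => by
    simp_rw [prod_pow_two_mul_single, Finset.sum_mul]
  simp_rw [h]
  rw [integral_finsetSum _ fun i _ => integrable_prod_pow_two_mul_mul_exp_neg_sum_abs _]
  simp_rw [integral_prod_pow_two_mul_mul_exp_neg_sum_abs, prod_factorial_two_mul_single,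
    Finset.sum_const, Finset.card_univ, nsmul_eq_mul]
  ring

theorem integral_sum_sq_sq_mul_exp_neg_sum_abs :
    ∫ x : ι → ℝ, (∑ i, x i ^ 2) ^ 2 * exp (-∑ i, |x i|) =
      2 ^ Fintype.card ι * (4 * Fintype.card ι * (Fintype.card ι + 5)) := by
  have h : ∀ x : ι → ℝ, (∑ i, x i ^ 2) ^ 2 * exp (-∑ i, |x i|) =
      ∑ i, ∑ j, (∏ l, x l ^ (2 * (Pi.single i 1 + Pi.single j 1 : ι → ℕ) l)) *
        exp (-∑ l, |x l|) := fun x => by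
    simp_rw [Pi.add_apply, mul_add, pow_add, Finset.prod_mul_distrib, prod_pow_two_mul_single,
      sq (∑ i, x i ^ 2), Finset.sum_mul_sum, Finset.sum_mul]
  have hcount : ∀ i j : ι, (if i = j then (24 : ℝ) else 4) = 4 + if i = j then 20 else 0 :=
    fun i j => by split_ifs <;> norm_num
  simp_rw [h]
  rw [integral_finsetSum _ fun i _ => integrable_finsetSum _ fun j _ =>
    integrable_prod_pow_two_mul_mul_exp_neg_sum_abs _]
  simp_rw [integral_finsetSum _ fun j _ => integrable_prod_pow_two_mul_mul_exp_neg_sum_abs _,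
    integral_prod_pow_two_mul_mul_exp_neg_sum_abs, prod_factorial_two_mul_single_add_single,
    hcount, mul_add, Finset.sum_add_distrib, ← Finset.mul_sum, Finset.sum_ite_eq,
    Finset.mem_univ, if_true, Finset.sum_const, Finset.card_univ, nsmul_eq_mul]
  ring

end LaplaceMoments

namespace B1

variable {n : ℕ}

theorem measurableSet : MeasurableSet (B1 n) :=
  measurableSet_le (by fun_prop) measurable_const

theorem factorial_mul_setIntegral_norm_pow (k : ℕ) :
    (n + 2 * k)! * ∫ x in B1 n, ‖x‖ ^ (2 * k) =
      ∫ y : Fin n → ℝ, (∑ i, y i ^ 2) ^ k * exp (-∑ i, |y i|) := by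
  have h := integral_mul_exp_neg_eq_factorial_mul (volume : Measure (EuclideanSpace ℝ (Fin n)))
    (N := fun x => ∑ i, |x i|) (g := fun x => ‖x‖ ^ (2 * k)) (d := 2 * k) (by fun_prop)
    (fun x => by positivity) (fun c hc x => by simp [abs_mul, abs_of_pos hc, Finset.mul_sum])
    (by fun_prop) (fun x => by positivity)
    (fun c hc x => by rw [norm_smul, mul_pow, Real.norm_of_nonneg hc.le])
  rw [finrank_euclideanSpace_fin] at h
  rw [B1, ← h,
    ← (EuclideanSpace.volume_preserving_symm_measurableEquiv_toLp (Fin n)).integral_comp']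
  simp [pow_mul, EuclideanSpace.real_norm_sq_eq]

theorem factorial_mul_volume_real : n ! * volume.real (B1 n) = 2 ^ n := by
  simpa [integral_exp_neg_sum_abs] using factorial_mul_setIntegral_norm_pow (n := n) 0

theorem factorial_mul_setIntegral_norm_sq :
    (n + 2)! * ∫ x in B1 n, ‖x‖ ^ 2 = 2 ^ n * (2 * n) := by
  simpa [integral_sum_sq_mul_exp_neg_sum_abs] using factorial_mul_setIntegral_norm_pow (n := n) 1

theorem factorial_mul_setIntegral_norm_pow_four :
    (n + 4)! * ∫ x in B1 n, ‖x‖ ^ 4 = 2 ^ n * (4 * n * (n + 5)) := by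
  simpa [integral_sum_sq_sq_mul_exp_neg_sum_abs] using
    factorial_mul_setIntegral_norm_pow (n := n) 2

theorem volume_real_pos : 0 < volume.real (B1 n) := by
  have h := factorial_mul_volume_real (n := n)
  have : (0 : ℝ) < n ! := by positivity
  nlinarith [measureReal_nonneg (μ := volume) (s := B1 n), pow_pos (two_pos (α := ℝ)) n]

theorem volume_ne_top : volume (B1 n) ≠ ∞ := by
  have h := volume_real_pos (n := n)
  intro htop
  simp [measureReal_def, htop] at h

theorem setIntegral_sq_norm_sub_sq (hn : 0 < n) :
    ∫ x in B1 n, (‖x‖ ^ 2 - 2 / n) ^ 2 = volume.real (B1 n) *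
      (4 * n ^ 3 + 44 * n ^ 2 + 200 * n + 96) /
        (n ^ 2 * ((n + 1) * (n + 2) * (n + 3) * (n + 4))) := by
  have hn' : (0 : ℝ) < n := by exact_mod_cast hn
  have h0 := factorial_mul_volume_real (n := n)
  have h2 := factorial_mul_setIntegral_norm_sq (n := n)
  have h4 := factorial_mul_setIntegral_norm_pow_four (n := n)
  have hi2 : IntegrableOn (fun x => ‖x‖ ^ 2) (B1 n) :=
    Integrable.of_integral_ne_zero fun h => by
      rw [h, mul_zero] at h2; exact (by positivity : (2 : ℝ) ^ n * (2 * n) ≠ 0) h2.symm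
  have hi4 : IntegrableOn (fun x => ‖x‖ ^ 4) (B1 n) :=
    Integrable.of_integral_ne_zero fun h => by
      rw [h, mul_zero] at h4; exact (by positivity : (2 : ℝ) ^ n * (4 * n * (n + 5)) ≠ 0) h4.symm
  have hexpand : ∀ x : EuclideanSpace ℝ (Fin n),
      (‖x‖ ^ 2 - 2 / n) ^ 2 = ‖x‖ ^ 4 - 4 / n * ‖x‖ ^ 2 + 4 / n ^ 2 := fun x => by ring
  have hi : IntegrableOn (fun x => ‖x‖ ^ 4 - 4 / n * ‖x‖ ^ 2) (B1 n) :=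
    hi4.sub (hi2.const_mul _)
  simp_rw [hexpand]
  rw [integral_add hi (integrableOn_const volume_ne_top), integral_sub hi4 (hi2.const_mul _),
    integral_const_mul, setIntegral_const, smul_eq_mul]
  have hf2 : ((n + 2)! : ℝ) = (n + 1) * (n + 2) * n ! := by
    push_cast [Nat.factorial_succ]; ring
  have hf4 : ((n + 4)! : ℝ) = (n + 1) * (n + 2) * (n + 3) * (n + 4) * n ! := by
    push_cast [Nat.factorial_succ]; ring
  rw [hf2] at h2
  rw [hf4] at h4
  rw [eq_div_of_mul_eq (by positivity) ((mul_comm _ _).trans h0),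
    eq_div_of_mul_eq (by positivity) ((mul_comm _ _).trans h2),
    eq_div_of_mul_eq (by positivity) ((mul_comm _ _).trans h4)]
  field_simp
  ring

theorem sq_mul_volume_real_sq_norm_ge_le {δ : ℝ} (hn : 0 < n) (hδ : 0 ≤ δ) :
    δ ^ 2 * n * volume.real {x ∈ B1 n | (2 + δ) / n ≤ ‖x‖ ^ 2} ≤ 5 * volume.real (B1 n) := by
  have hn' : (0 : ℝ) < n := by exact_mod_cast hn
  have hvar := setIntegral_sq_norm_sub_sq hn
  have hint : IntegrableOn (fun x => (‖x‖ ^ 2 - 2 / n) ^ 2) (B1 n) :=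
    Integrable.of_integral_ne_zero (by rw [hvar]; have := volume_real_pos (n := n); positivity)
  have hmarkov := mul_meas_ge_le_integral_of_nonneg (ae_of_all _ fun x => sq_nonneg _) hint
    ((δ / n) ^ 2)
  rw [measureReal_restrict_apply' measurableSet, hvar] at hmarkov
  have hsub : {x ∈ B1 n | (2 + δ) / n ≤ ‖x‖ ^ 2} ⊆
      {x | (δ / n) ^ 2 ≤ (‖x‖ ^ 2 - 2 / n) ^ 2} ∩ B1 n := by
    rintro x ⟨hx, hxδ⟩
    have hδx : δ / n ≤ ‖x‖ ^ 2 - 2 / n := by rw [add_div] at hxδ; linarith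
    exact ⟨pow_le_pow_left₀ (by positivity) hδx 2, hx⟩
  have hK := measureReal_mono hsub
    ((measure_mono inter_subset_right).trans_lt volume_ne_top.lt_top).ne
  set K := volume.real {x ∈ B1 n | (2 + δ) / n ≤ ‖x‖ ^ 2}
  set V := volume.real (B1 n)
  calc δ ^ 2 * n * K = n ^ 3 * ((δ / n) ^ 2 * K) := by field_simp
    _ ≤ n ^ 3 * (V * (4 * n ^ 3 + 44 * n ^ 2 + 200 * n + 96) /
          (n ^ 2 * ((n + 1) * (n + 2) * (n + 3) * (n + 4)))) := by
        gcongr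
        exact (mul_le_mul_of_nonneg_left hK (by positivity)).trans hmarkov
    _ = V * (n * (4 * n ^ 3 + 44 * n ^ 2 + 200 * n + 96) /
          ((n + 1) * (n + 2) * (n + 3) * (n + 4))) := by field_simp
    _ ≤ V * 5 := by
        gcongr
        rw [div_le_iff₀ (by positivity)]
        nlinarith [pow_pos hn' 3, pow_pos hn' 4, sq_nonneg ((n : ℝ) - 2)]
    _ = 5 * V := mul_comm _ _

theorem volume_real_div_two_le_inter_closedBall {δ t : ℝ} (hδ : 0 ≤ δ)
    (hnδ : 10 ≤ δ ^ 2 * n) (ht : 0 ≤ t) (hδt : (2 + δ) / n ≤ t ^ 2) :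
    volume.real (B1 n) / 2 ≤ volume.real (B1 n ∩ Metric.closedBall 0 t) := by
  have hn : 0 < n := Nat.pos_of_ne_zero fun h => by norm_num [h] at hnδ
  have hK := sq_mul_volume_real_sq_norm_ge_le hn hδ
  have hcover : B1 n ⊆
      (B1 n ∩ Metric.closedBall 0 t) ∪ {x ∈ B1 n | (2 + δ) / n ≤ ‖x‖ ^ 2} := by
    intro x hx
    by_cases hxt : ‖x‖ ≤ t
    · exact Or.inl ⟨hx, mem_closedBall_zero_iff.2 hxt⟩
    · exact Or.inr ⟨hx, hδt.trans (pow_le_pow_left₀ ht (not_le.1 hxt).le 2)⟩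
  have hV : volume.real (B1 n) ≤ volume.real (B1 n ∩ Metric.closedBall 0 t) +
      volume.real {x ∈ B1 n | (2 + δ) / n ≤ ‖x‖ ^ 2} :=
    (measureReal_mono hcover ((measure_mono (union_subset inter_subset_left
      (sep_subset _ _))).trans_lt volume_ne_top.lt_top).ne).trans (measureReal_union_le _ _)
  nlinarith [mul_le_mul_of_nonneg_right hnδ
    (measureReal_nonneg (μ := volume) (s := {x ∈ B1 n | (2 + δ) / n ≤ ‖x‖ ^ 2}))]

end B1

theorem inv_smul_inter_smul_inv_smul_closedBall {E : Type*} [NormedAddCommGroup E]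
    [NormedSpace ℝ E] {a b s : ℝ} (ha : 0 < a) (hb : 0 < b) (hs : 0 ≤ s) (A : Set E) :
    a⁻¹ • A ∩ s • b⁻¹ • Metric.closedBall (0 : E) 1 =
      a⁻¹ • (A ∩ Metric.closedBall 0 (a * s / b)) := by
  rw [smul_set_inter₀ (inv_ne_zero ha.ne'), smul_closedBall _ _ zero_le_one,
    smul_closedBall _ _ (by positivity), smul_closedBall _ _ (by positivity)]
  simp only [smul_zero, Real.norm_eq_abs, abs_of_pos (inv_pos.2 ha), abs_of_pos (inv_pos.2 hb),
    abs_of_nonneg hs]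
  congr 2
  field_simp

/-- For every `γ > 0` there is `n₀` such that for all `n ≥ n₀` and all
`s ≥ ((√2 + γ)/√n)·vol(B₂ⁿ)^{1/n}/vol(B₁ⁿ)^{1/n}`, the volume of
`(B₁ⁿ/vol(B₁ⁿ)^{1/n}) ∩ s(B₂ⁿ/vol(B₂ⁿ)^{1/n})` lies between `1/2` and `1`. -/
theorem volume_normCross_inter_normBall :
    ∀ γ > (0 : ℝ), ∃ n₀ : ℕ, ∀ n ≥ n₀, ∀ s : ℝ,
      (Real.sqrt 2 + γ) / Real.sqrt n *
          (volume (B2 n)).toReal ^ (1 / (n : ℝ)) / (volume (B1 n)).toReal ^ (1 / (n : ℝ)) ≤ s →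
      (1 / 2 : ℝ) ≤
          (volume ((((volume (B1 n)).toReal ^ (1 / (n : ℝ)))⁻¹ • B1 n) ∩
            s • (((volume (B2 n)).toReal ^ (1 / (n : ℝ)))⁻¹ • B2 n))).toReal ∧
        (volume ((((volume (B1 n)).toReal ^ (1 / (n : ℝ)))⁻¹ • B1 n) ∩
            s • (((volume (B2 n)).toReal ^ (1 / (n : ℝ)))⁻¹ • B2 n))).toReal ≤ 1 := by
  intro γ hγ
  set δ := (√2 + γ) ^ 2 - 2 with hδ_def
  have hδ : 0 < δ := by nlinarith [Real.sq_sqrt (zero_le_two (α := ℝ)), Real.sqrt_nonneg 2]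
  refine ⟨⌈10 / δ ^ 2⌉₊, fun n hn s hs => ?_⟩
  have hnδ : 10 ≤ δ ^ 2 * n := (div_le_iff₀' (by positivity)).1 (Nat.ceil_le.1 hn)
  have hn0 : (0 : ℝ) < n := by nlinarith
  simp only [← measureReal_def] at hs ⊢
  set c₁ := volume.real (B1 n) ^ (1 / (n : ℝ))
  set c₂ := volume.real (B2 n) ^ (1 / (n : ℝ))
  have hc₁ : 0 < c₁ := Real.rpow_pos_of_pos B1.volume_real_pos _
  have hc₂ : 0 < c₂ := Real.rpow_pos_of_pos (ENNReal.toReal_pos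
    (Metric.measure_closedBall_pos _ _ one_pos).ne' measure_closedBall_lt_top.ne) _
  have hs0 : 0 < s := lt_of_lt_of_le (by positivity) hs
  have ht : (2 + δ) / n ≤ (c₁ * s / c₂) ^ 2 := by
    rw [hδ_def, add_sub_cancel, ← Real.sq_sqrt hn0.le, ← div_pow]
    refine pow_le_pow_left₀ (by positivity) ?_ 2
    rw [le_div_iff₀ hc₂]
    rw [div_le_iff₀ hc₁] at hs
    linarith
  have hnorm := measureReal_inv_rpow_smul (volume : Measure (EuclideanSpace ℝ (Fin n)))
    (by rw [finrank_euclideanSpace_fin]; exact_mod_cast hn0.ne') (B1 n)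
    (B1 n ∩ Metric.closedBall 0 (c₁ * s / c₂))
  rw [finrank_euclideanSpace_fin] at hnorm
  rw [B2, inv_smul_inter_smul_inv_smul_closedBall hc₁ hc₂ hs0.le, hnorm,
    le_div_iff₀ B1.volume_real_pos, div_le_one B1.volume_real_pos]
  exact ⟨by linarith [B1.volume_real_div_two_le_inter_closedBall hδ.le hnδ (by positivity) ht],
    measureReal_mono inter_subset_left B1.volume_ne_top⟩
end
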